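/- arXiv:2507.06969 — 16 statements merged into one kernel-verified Lean document; each statement's English description precedes it below -/
import Mathlib

section
/- Let Θ be a measurable space, let P and Q be probability measures on Θ, and let f be a trade-off function. Then the following are equivalent: (i) for every measurable function φ : Θ → [0,1] one has 1 − ∫ φ dP ≥ f(∫ φ dQ) (i.e., every randomized test with type-I error ∫ φ dQ ≤ α under Q has type-II error 1 − ∫ φ dP ≥ f(α) under P); (ii) for every measurable set E ⊆ Θ one has P(E) ≤ 1 − f(Q(E)). -/
open MeasureTheory ProbabilityTheory

/-- A trade-off function: convex, continuous, non-increasing on `[0,1]`,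
taking values in `[0,1]` with `f α ≤ 1 - α`. -/
def IsTradeoff (f : ℝ → ℝ) : Prop :=
  ConvexOn ℝ (Set.Icc (0:ℝ) 1) f ∧ ContinuousOn f (Set.Icc (0:ℝ) 1) ∧
  AntitoneOn f (Set.Icc (0:ℝ) 1) ∧
  ∀ x ∈ Set.Icc (0:ℝ) 1, f x ∈ Set.Icc (0:ℝ) 1 ∧ f x ≤ 1 - x

/-!
Testing with the indicator of `E` turns (i) into (ii). Conversely, by the layer-cake formula
`∫ φ dμ = ∫₀¹ μ{φ ≥ t} dt` a test is an average of the indicator tests of its upper level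
sets.
Jensen's inequality for the convex `f` and the set-level bound on each level set give
`f (∫ φ dQ) ≤ ∫₀¹ f (Q{φ ≥ t}) dt ≤ ∫₀¹ (1 - P{φ ≥ t}) dt = 1 - ∫ φ dP`.
-/

open Set

lemma measureReal_mem_Icc {α : Type*} [MeasurableSpace α] {μ : Measure α}
    [IsProbabilityMeasure μ] (s : Set α) : μ.real s ∈ Icc (0 : ℝ) 1 :=
  ⟨measureReal_nonneg, measureReal_le_one⟩

section LayerCake

variable {Θ : Type*} [MeasurableSpace Θ] (μ : Measure Θ) [IsFiniteMeasure μ] (φ : Θ → ℝ)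

lemma antitone_measureReal_setOf_le : Antitone fun t => μ.real {θ | t ≤ φ θ} :=
  fun _ _ hst => measureReal_mono fun _ hθ => hst.trans hθ

variable {φ}

lemma integral_eq_setIntegral_Ioc_measureReal_le (hφ : Measurable φ)
    (hφ01 : ∀ θ, φ θ ∈ Icc (0 : ℝ) 1) :
    ∫ θ, φ θ ∂μ = ∫ t in Ioc 0 1, μ.real {θ | t ≤ φ θ} :=
  (Integrable.of_mem_Icc 0 1 hφ.aemeasurable (.of_forall hφ01)).integral_eq_integral_Ioc_meas_le
    (.of_forall fun θ => (hφ01 θ).1) (.of_forall fun θ => (hφ01 θ).2)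

end LayerCake

section Jensen

variable {f : ℝ → ℝ} {ν : Measure ℝ} {g : ℝ → ℝ}

lemma IsTradeoff.integrable_comp (hf : IsTradeoff f) [IsFiniteMeasure ν] (hg : Antitone g)
    (hg01 : ∀ t, g t ∈ Icc (0 : ℝ) 1) : Integrable (fun t => f (g t)) ν :=
  have hfg : Monotone (f ∘ g) := fun _ _ hst => hf.2.2.1 (hg01 _) (hg01 _) (hg hst)
  .of_mem_Icc 0 1 hfg.measurable.aemeasurable (.of_forall fun t => (hf.2.2.2 _ (hg01 t)).1)

lemma IsTradeoff.map_integral_le (hf : IsTradeoff f) [IsProbabilityMeasure ν] (hg : Antitone g)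
    (hg01 : ∀ t, g t ∈ Icc (0 : ℝ) 1) :
    f (∫ t, g t ∂ν) ≤ ∫ t, f (g t) ∂ν :=
  hf.1.map_integral_le hf.2.1 isClosed_Icc (.of_forall hg01)
    (.of_mem_Icc 0 1 hg.measurable.aemeasurable (.of_forall hg01)) (hf.integrable_comp hg hg01)

end Jensen

section Representations

variable {Θ : Type*} [MeasurableSpace Θ] {P Q : Measure Θ} {f : ℝ → ℝ}

lemma measureReal_le_one_sub_of_forall_integral
    (htest : ∀ φ : Θ → ℝ, Measurable φ → (∀ θ, φ θ ∈ Icc (0 : ℝ) 1) →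
      f (∫ θ, φ θ ∂Q) ≤ 1 - ∫ θ, φ θ ∂P)
    {E : Set Θ} (hE : MeasurableSet E) : P.real E ≤ 1 - f (Q.real E) := by
  have h := htest (E.indicator 1) (measurable_const.indicator hE)
    (fun θ => by by_cases hθ : θ ∈ E <;> simp [hθ])
  simp only [Pi.one_def, integral_indicator_const (1 : ℝ) hE, smul_eq_mul, mul_one] at h
  linarith

lemma IsTradeoff.le_one_sub_integral [IsProbabilityMeasure P] [IsProbabilityMeasure Q]
    (hf : IsTradeoff f)
    (hset : ∀ E : Set Θ, MeasurableSet E → P.real E ≤ 1 - f (Q.real E))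
    {φ : Θ → ℝ} (hφ : Measurable φ) (hφ01 : ∀ θ, φ θ ∈ Icc (0 : ℝ) 1) :
    f (∫ θ, φ θ ∂Q) ≤ 1 - ∫ θ, φ θ ∂P := by
  have : IsProbabilityMeasure (volume.restrict (Ioc (0 : ℝ) 1)) := ⟨by simp⟩
  have hPint : IntegrableOn (fun t => P.real {θ | t ≤ φ θ}) (Ioc 0 1) :=
    .of_mem_Icc 0 1 (antitone_measureReal_setOf_le P φ).measurable.aemeasurable
      (.of_forall fun _ => measureReal_mem_Icc _)
  rw [integral_eq_setIntegral_Ioc_measureReal_le Q hφ hφ01,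
    integral_eq_setIntegral_Ioc_measureReal_le P hφ hφ01]
  calc f (∫ t in Ioc 0 1, Q.real {θ | t ≤ φ θ})
      ≤ ∫ t in Ioc 0 1, f (Q.real {θ | t ≤ φ θ}) :=
        hf.map_integral_le (antitone_measureReal_setOf_le Q φ) fun _ => measureReal_mem_Icc _
    _ ≤ ∫ t in Ioc 0 1, (1 - P.real {θ | t ≤ φ θ}) := by
        refine integral_mono ?_ ((integrable_const 1).sub hPint) fun t => ?_
        · exact hf.integrable_comp (antitone_measureReal_setOf_le Q φ) fun _ =>
            measureReal_mem_Icc _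
        · linarith [hset {θ | t ≤ φ θ} (measurableSet_le measurable_const hφ)]
    _ = 1 - ∫ t in Ioc 0 1, P.real {θ | t ≤ φ θ} := by
        rw [integral_sub (integrable_const 1) hPint]
        simp

end Representations

/-- Lemma 1: the hypothesis-testing (trade-off curve) representation is
equivalent to the set-level (variational) representation. -/
theorem stmt_0 {Θ : Type*} [MeasurableSpace Θ] (P Q : Measure Θ)
    [IsProbabilityMeasure P] [IsProbabilityMeasure Q]
    (f : ℝ → ℝ) (hf : IsTradeoff f) :
    (∀ φ : Θ → ℝ, Measurable φ → (∀ θ, φ θ ∈ Set.Icc (0:ℝ) 1) →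
        f (∫ θ, φ θ ∂Q) ≤ 1 - ∫ θ, φ θ ∂P) ↔
    (∀ E : Set Θ, MeasurableSet E → (P E).toReal ≤ 1 - f ((Q E).toReal)) :=
  ⟨fun htest _ hE => measureReal_le_one_sub_of_forall_integral htest hE,
    fun hset _ hφ hφ01 => hf.le_one_sub_integral hset hφ hφ01⟩
end

section
/- Let D and Θ be measurable spaces with Θ nonempty, let f be a trade-off function, let μ be a Markov kernel from D to Θ, and let ν be a probability measure on Θ such that for every z ∈ D the pair (ν, μ(z)) satisfies the f-DP inequality. Then for every probability measure P on D and every jointly measurable function q : D × Θ → [0,1], ∫_D ∫_Θ q(z,θ) d(μ(z))(θ) dP(z) ≤ 1 − f( ∫_D ∫_Θ q(z,θ) dν(θ) dP(z) ). -/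
open MeasureTheory ProbabilityTheory

/-- The pair `(P, Q)` satisfies the `f`-DP inequality: every randomized test `φ` has
`∫ φ dQ ≤ 1 - f (∫ φ dP)`. -/
def FDPIneq {Θ : Type*} [MeasurableSpace Θ] (f : ℝ → ℝ) (P Q : Measure Θ) : Prop :=
  ∀ φ : Θ → ℝ, Measurable φ → (∀ θ, φ θ ∈ Set.Icc (0:ℝ) 1) →
    ∫ θ, φ θ ∂Q ≤ 1 - f (∫ θ, φ θ ∂P)

/-- Lemma B.3 (dataset-specific on-average bound). -/
theorem stmt_1 {D Θ : Type*} [MeasurableSpace D] [MeasurableSpace Θ] [Nonempty Θ]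
    (f : ℝ → ℝ) (hf : IsTradeoff f)
    (μ : Kernel D Θ) [IsMarkovKernel μ]
    (ν : Measure Θ) [IsProbabilityMeasure ν]
    (hDP : ∀ z : D, FDPIneq f ν (μ z))
    (P : Measure D) [IsProbabilityMeasure P]
    (q : D → Θ → ℝ) (hq : Measurable (Function.uncurry q))
    (hq01 : ∀ z θ, q z θ ∈ Set.Icc (0:ℝ) 1) :
    ∫ z, ∫ θ, q z θ ∂(μ z) ∂P ≤ 1 - f (∫ z, ∫ θ, q z θ ∂ν ∂P) := by
  obtain ⟨hconv, hcont, hanti, hval⟩ := hf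
  set g : D → ℝ := fun z => ∫ θ, q z θ ∂ν with hg
  set h : D → ℝ := fun z => ∫ θ, q z θ ∂(μ z) with hh
  -- measurability of g and h
  have hqz : ∀ z, Measurable (q z) := fun z =>
    hq.comp (measurable_prodMk_left)
  have hmg : Measurable g := by
    have : StronglyMeasurable fun z => ∫ θ, (Function.uncurry q) (z, θ) ∂((Kernel.const D ν) z) :=
      hq.stronglyMeasurable.integral_kernel_prod_right' (κ := Kernel.const D ν)
    simpa [Kernel.const_apply, Function.uncurry] using this.measurable
  have hmh : Measurable h := by
    have : StronglyMeasurable fun z => ∫ θ, (Function.uncurry q) (z, θ) ∂(μ z) :=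
      hq.stronglyMeasurable.integral_kernel_prod_right' (κ := μ)
    simpa [Function.uncurry] using this.measurable
  -- pointwise bounds
  have hgmem : ∀ z, g z ∈ Set.Icc (0:ℝ) 1 := by
    intro z
    constructor
    · exact integral_nonneg fun θ => (hq01 z θ).1
    · calc ∫ θ, q z θ ∂ν ≤ ∫ _θ, (1:ℝ) ∂ν :=
            integral_mono ((integrable_const (1:ℝ)).mono'
              (hqz z).aestronglyMeasurable (by
                filter_upwards with θ
                rw [Real.norm_eq_abs, abs_le]
                exact ⟨by linarith [(hq01 z θ).1], (hq01 z θ).2⟩))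
              (integrable_const 1) (fun θ => (hq01 z θ).2)
        _ = 1 := by simp
  have hhmem : ∀ z, h z ∈ Set.Icc (0:ℝ) 1 := by
    intro z
    constructor
    · exact integral_nonneg fun θ => (hq01 z θ).1
    · calc ∫ θ, q z θ ∂(μ z) ≤ ∫ _θ, (1:ℝ) ∂(μ z) :=
            integral_mono ((integrable_const (1:ℝ)).mono'
              (hqz z).aestronglyMeasurable (by
                filter_upwards with θ
                rw [Real.norm_eq_abs, abs_le]
                exact ⟨by linarith [(hq01 z θ).1], (hq01 z θ).2⟩))
              (integrable_const 1) (fun θ => (hq01 z θ).2)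
        _ = 1 := by simp
  -- pointwise DP bound
  have hpt : ∀ z, h z ≤ 1 - f (g z) := fun z => hDP z (q z) (hqz z) (hq01 z)
  -- integrability on P
  have hbd : ∀ (u : D → ℝ), Measurable u → (∀ z, u z ∈ Set.Icc (0:ℝ) 1) → Integrable u P := by
    intro u hu hu01
    refine (integrable_const (1:ℝ)).mono' hu.aestronglyMeasurable ?_
    filter_upwards with z
    rw [Real.norm_eq_abs, abs_le]
    exact ⟨by linarith [(hu01 z).1], (hu01 z).2⟩
  have hgi : Integrable g P := hbd g hmg hgmem
  have hhi : Integrable h P := hbd h hmh hhmem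
  -- f ∘ g is measurable: extend f continuously
  set proj : ℝ → ℝ := fun x => max 0 (min 1 x) with hproj
  have hprojmem : ∀ x, proj x ∈ Set.Icc (0:ℝ) 1 := fun x =>
    ⟨le_max_left _ _, max_le (by norm_num) (min_le_left _ _)⟩
  have hprojc : Continuous proj := continuous_const.max (continuous_const.min continuous_id)
  have hprojeq : ∀ x ∈ Set.Icc (0:ℝ) 1, proj x = x := by
    intro x hx
    simp only [hproj]
    rw [min_eq_right hx.2, max_eq_right hx.1]
  have hfextc : Continuous (f ∘ proj) :=
    hcont.comp_continuous hprojc hprojmem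
  have hfgm : Measurable fun z => f (g z) := by
    have h1 : Measurable fun z => (f ∘ proj) (g z) := hfextc.measurable.comp hmg
    have h2 : (fun z => f (g z)) = fun z => (f ∘ proj) (g z) := by
      funext z
      simp [Function.comp, hprojeq _ (hgmem z)]
    rw [h2]; exact h1
  have hfg01 : ∀ z, f (g z) ∈ Set.Icc (0:ℝ) 1 := fun z => (hval _ (hgmem z)).1
  have hfgi : Integrable (fun z => f (g z)) P := hbd _ hfgm hfg01
  haveI : NeZero P := ⟨IsProbabilityMeasure.ne_zero P⟩
  -- Jensen
  have hjen : f (∫ z, g z ∂P) ≤ ∫ z, f (g z) ∂P := by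
    have := hconv.map_average_le hcont isClosed_Icc
      (Filter.Eventually.of_forall hgmem) hgi (hbd _ hfgm hfg01)
    simpa [average_eq_integral] using this
  have hstep : ∫ z, h z ∂P ≤ ∫ z, (1 - f (g z)) ∂P :=
    integral_mono hhi ((integrable_const 1).sub hfgi) hpt
  have heq : ∫ z, (1 - f (g z)) ∂P = 1 - ∫ z, f (g z) ∂P := by
    rw [integral_sub (integrable_const 1) hfgi]
    simp
  calc ∫ z, h z ∂P ≤ 1 - ∫ z, f (g z) ∂P := by rw [← heq]; exact hstep
    _ ≤ 1 - f (∫ z, g z ∂P) := by linarith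
end

section
/- Let D and Θ be measurable spaces with Θ nonempty, let f be a trade-off function, let μ be a Markov kernel from D to Θ, and let ν be a probability measure on Θ such that for every z ∈ D the pair (ν, μ(z)) satisfies the f-DP inequality. Then for every probability measure P on D and every jointly measurable function q : D × Θ → [0,1], ∫_D ∫_Θ q(z,θ) d(μ(z))(θ) dP(z) ≤ 1 − f( sup_{θ ∈ Θ} ∫_D q(z,θ) dP(z) ). -/
open MeasureTheory ProbabilityTheory

/-- integrability of a `[0,1]`-valued function on a finite measure space. -/
lemma integrable_of_mem_Icc {α : Type*} [MeasurableSpace α] {m : Measure α}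
    [IsFiniteMeasure m] {u : α → ℝ} (hu : AEStronglyMeasurable u m)
    (h01 : ∀ x, u x ∈ Set.Icc (0:ℝ) 1) : Integrable u m :=
  (integrable_const (1:ℝ)).mono' hu (Filter.Eventually.of_forall fun x => by
    rw [Real.norm_eq_abs, abs_of_nonneg (h01 x).1]; exact (h01 x).2)

lemma integral_mem_Icc {α : Type*} [MeasurableSpace α] {m : Measure α}
    [IsProbabilityMeasure m] {u : α → ℝ} (hu : AEStronglyMeasurable u m)
    (h01 : ∀ x, u x ∈ Set.Icc (0:ℝ) 1) : ∫ x, u x ∂m ∈ Set.Icc (0:ℝ) 1 := by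
  constructor
  · exact integral_nonneg fun x => (h01 x).1
  · calc ∫ x, u x ∂m ≤ ∫ _x, (1:ℝ) ∂m :=
          integral_mono (integrable_of_mem_Icc hu h01) (integrable_const 1)
            fun x => (h01 x).2
      _ = 1 := by simp

/-- Theorem 2 (avg-to-sup baseline): the unifying bound on attack success via the
supremum baseline. -/
theorem stmt_2 {D Θ : Type*} [MeasurableSpace D] [MeasurableSpace Θ] [Nonempty Θ]
    (f : ℝ → ℝ) (hf : IsTradeoff f)
    (μ : Kernel D Θ) [IsMarkovKernel μ]
    (ν : Measure Θ) [IsProbabilityMeasure ν]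
    (hDP : ∀ z : D, FDPIneq f ν (μ z))
    (P : Measure D) [IsProbabilityMeasure P]
    (q : D → Θ → ℝ) (hq : Measurable (Function.uncurry q))
    (hq01 : ∀ z θ, q z θ ∈ Set.Icc (0:ℝ) 1) :
    ∫ z, ∫ θ, q z θ ∂(μ z) ∂P ≤ 1 - f (⨆ θ : Θ, ∫ z, q z θ ∂P) := by
  obtain ⟨hconv, hcont, hanti, hrange⟩ := hf
  set g : D → ℝ := fun z => ∫ θ, q z θ ∂ν with hg_def
  set h : Θ → ℝ := fun θ => ∫ z, q z θ ∂P with hh_def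
  set s : ℝ := ⨆ θ : Θ, h θ with hs_def
  have hqz_meas : ∀ z, Measurable (q z) := fun z => hq.of_uncurry_left
  have hqθ_meas : ∀ θ, Measurable (fun z => q z θ) := fun θ => hq.of_uncurry_right
  -- measurability of g and h
  have hg_sm : StronglyMeasurable g :=
    hq.stronglyMeasurable.integral_prod_right
  have hg01 : ∀ z, g z ∈ Set.Icc (0:ℝ) 1 := fun z =>
    integral_mem_Icc (hqz_meas z).aestronglyMeasurable (hq01 z)
  have hh_sm : StronglyMeasurable h :=
    hq.stronglyMeasurable.integral_prod_left
  have hh01 : ∀ θ, h θ ∈ Set.Icc (0:ℝ) 1 := fun θ =>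
    integral_mem_Icc (hqθ_meas θ).aestronglyMeasurable fun z => hq01 z θ
  -- s ∈ [0,1]
  have hbdd : BddAbove (Set.range h) := ⟨1, by rintro _ ⟨θ, rfl⟩; exact (hh01 θ).2⟩
  have hs01 : s ∈ Set.Icc (0:ℝ) 1 := by
    constructor
    · obtain ⟨θ0⟩ := (inferInstance : Nonempty Θ)
      exact le_trans (hh01 θ0).1 (le_ciSup hbdd θ0)
    · exact ciSup_le fun θ => (hh01 θ).2
  -- f ∘ g is measurable via the subtype trick
  have hfg_meas : Measurable (fun z => f (g z)) := by
    have hg' : Measurable (fun z => (⟨g z, hg01 z⟩ : Set.Icc (0:ℝ) 1)) :=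
      Measurable.subtype_mk hg_sm.measurable
    have hfr : Continuous (fun x : Set.Icc (0:ℝ) 1 => f x) :=
      continuousOn_iff_continuous_restrict.1 hcont
    exact hfr.measurable.comp hg'
  have hfg01 : ∀ z, f (g z) ∈ Set.Icc (0:ℝ) 1 := fun z => (hrange _ (hg01 z)).1
  -- pointwise DP bound and integrate
  have hstep : ∀ z, ∫ θ, q z θ ∂(μ z) ≤ 1 - f (g z) := fun z =>
    hDP z (q z) (hqz_meas z) (hq01 z)
  have hinner_sm : StronglyMeasurable (fun z => ∫ θ, q z θ ∂(μ z)) :=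
    hq.stronglyMeasurable.integral_kernel_prod_right
  have hinner01 : ∀ z, (∫ θ, q z θ ∂(μ z)) ∈ Set.Icc (0:ℝ) 1 := fun z =>
    integral_mem_Icc (hqz_meas z).aestronglyMeasurable (hq01 z)
  have hfg_int : Integrable (fun z => f (g z)) P :=
    integrable_of_mem_Icc hfg_meas.aestronglyMeasurable hfg01
  have h1 : ∫ z, ∫ θ, q z θ ∂(μ z) ∂P ≤ ∫ z, (1 - f (g z)) ∂P :=
    integral_mono (integrable_of_mem_Icc hinner_sm.aestronglyMeasurable hinner01)
      ((integrable_const 1).sub hfg_int) hstep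
  have h2 : ∫ z, (1 - f (g z)) ∂P = 1 - ∫ z, f (g z) ∂P := by
    rw [integral_sub (integrable_const 1) hfg_int]; simp
  -- Jensen
  have hg_int : Integrable g P := integrable_of_mem_Icc hg_sm.aestronglyMeasurable hg01
  have hjensen : f (∫ z, g z ∂P) ≤ ∫ z, f (g z) ∂P :=
    hconv.map_integral_le hcont isClosed_Icc
      (Filter.Eventually.of_forall hg01) hg_int hfg_int
  -- Fubini and sup bound: ∫ g dP ≤ s
  have hq_int : Integrable (Function.uncurry q) (P.prod ν) :=
    integrable_of_mem_Icc hq.aestronglyMeasurable fun p => hq01 p.1 p.2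
  have hfub : ∫ z, g z ∂P = ∫ θ, h θ ∂ν := integral_integral_swap hq_int
  have hh_int : Integrable h ν := integrable_of_mem_Icc hh_sm.aestronglyMeasurable hh01
  have hle : ∫ z, g z ∂P ≤ s := by
    rw [hfub]
    calc ∫ θ, h θ ∂ν ≤ ∫ _θ, s ∂ν :=
          integral_mono hh_int (integrable_const s) fun θ => le_ciSup hbdd θ
      _ = s := by simp
  have hgP01 : (∫ z, g z ∂P) ∈ Set.Icc (0:ℝ) 1 :=
    integral_mem_Icc hg_sm.aestronglyMeasurable hg01
  have hmono : f s ≤ f (∫ z, g z ∂P) := hanti hgP01 hs01 hle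
  calc ∫ z, ∫ θ, q z θ ∂(μ z) ∂P ≤ 1 - ∫ z, f (g z) ∂P := by rw [← h2]; exact h1
    _ ≤ 1 - f (∫ z, g z ∂P) := by linarith [hjensen]
    _ ≤ 1 - f s := by linarith [hmono]
end

section
/- Let D and Θ be measurable spaces with Θ nonempty, let f be a trade-off function, let μ be a Markov kernel from D to Θ, and let ν be a probability measure on Θ such that for every z ∈ D the pair (ν, μ(z)) satisfies the f-DP inequality. For a probability measure P on D and a jointly measurable q : D × Θ → [0,1], set B := sup_{θ ∈ Θ} ∫_D q(z,θ) dP(z). Then ∫_D ∫_Θ q(z,θ) d(μ(z))(θ) dP(z) − B ≤ 1 − f(B) − B. -/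
open MeasureTheory ProbabilityTheory

/-- Theorem 4 (advantage bound): success minus baseline is at most `1 - f(base) - base`. -/
theorem stmt_3 {D Θ : Type*} [MeasurableSpace D] [MeasurableSpace Θ] [Nonempty Θ]
    (f : ℝ → ℝ) (hf : IsTradeoff f)
    (μ : Kernel D Θ) [IsMarkovKernel μ]
    (ν : Measure Θ) [IsProbabilityMeasure ν]
    (hDP : ∀ z : D, FDPIneq f ν (μ z))
    (P : Measure D) [IsProbabilityMeasure P]
    (q : D → Θ → ℝ) (hq : Measurable (Function.uncurry q))
    (hq01 : ∀ z θ, q z θ ∈ Set.Icc (0:ℝ) 1)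
    (B : ℝ) (hB : B = ⨆ θ : Θ, ∫ z, q z θ ∂P) :
    (∫ z, ∫ θ, q z θ ∂(μ z) ∂P) - B ≤ 1 - f B - B := by
  obtain ⟨hconv, hcont, hanti, hrange⟩ := hf
  -- basic facts about g θ := ∫ z, q z θ ∂P
  set g : Θ → ℝ := fun θ => ∫ z, q z θ ∂P with hg
  have hqz : ∀ z, Measurable (q z) := fun z =>
    hq.comp (measurable_prodMk_left)
  have hqθ : ∀ θ, Measurable (fun z => q z θ) := fun θ =>
    hq.comp (measurable_prodMk_right)
  have hg01 : ∀ θ, g θ ∈ Set.Icc (0:ℝ) 1 := by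
    intro θ
    constructor
    · exact integral_nonneg fun z => (hq01 z θ).1
    · calc ∫ z, q z θ ∂P ≤ ∫ _, (1:ℝ) ∂P :=
            integral_mono_of_nonneg (ae_of_all _ fun z => (hq01 z θ).1)
              (integrable_const 1) (ae_of_all _ fun z => (hq01 z θ).2)
        _ = 1 := by simp
  have hbdd : BddAbove (Set.range g) := ⟨1, by rintro x ⟨θ, rfl⟩; exact (hg01 θ).2⟩
  have hB01 : B ∈ Set.Icc (0:ℝ) 1 := by
    obtain ⟨θ₀⟩ := ‹Nonempty Θ›
    constructor
    · rw [hB]; exact le_trans (hg01 θ₀).1 (le_ciSup hbdd θ₀)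
    · rw [hB]; exact ciSup_le fun θ => (hg01 θ).2
  -- t z := ∫ θ, q z θ ∂ν
  set t : D → ℝ := fun z => ∫ θ, q z θ ∂ν with ht
  have ht01 : ∀ z, t z ∈ Set.Icc (0:ℝ) 1 := by
    intro z
    constructor
    · exact integral_nonneg fun θ => (hq01 z θ).1
    · calc ∫ θ, q z θ ∂ν ≤ ∫ _, (1:ℝ) ∂ν :=
            integral_mono_of_nonneg (ae_of_all _ fun θ => (hq01 z θ).1)
              (integrable_const 1) (ae_of_all _ fun θ => (hq01 z θ).2)
        _ = 1 := by simp
  have htmeas : Measurable t := by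
    have := (hq.stronglyMeasurable).integral_kernel_prod_right
      (κ := Kernel.const D ν)
    simpa using this.measurable
  -- f ∘ t is measurable
  have hfmeas : Measurable (f ∘ t) := by
    have h1 : Measurable fun z => (⟨t z, ht01 z⟩ : Set.Icc (0:ℝ) 1) :=
      Measurable.subtype_mk htmeas
    have h2 : Continuous fun x : Set.Icc (0:ℝ) 1 => f x :=
      continuousOn_iff_continuous_restrict.1 hcont
    exact (h2.measurable).comp h1
  have htint : Integrable t P :=
    ⟨htmeas.aestronglyMeasurable, HasFiniteIntegral.of_bounded (C := 1)
      (ae_of_all _ fun z => by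
        rw [Real.norm_eq_abs, abs_le]
        exact ⟨by linarith [(ht01 z).1], (ht01 z).2⟩)⟩
  have hftint : Integrable (fun z => f (t z)) P :=
    ⟨hfmeas.aestronglyMeasurable, HasFiniteIntegral.of_bounded (C := 1)
      (ae_of_all _ fun z => by
        simp only [Real.norm_eq_abs, abs_le]
        have := (hrange (t z) (ht01 z)).1
        exact ⟨by linarith [this.1], this.2⟩)⟩
  -- measurability/integrability of z ↦ ∫ θ, q z θ ∂(μ z)
  set h : D → ℝ := fun z => ∫ θ, q z θ ∂(μ z) with hh
  have hhmeas : Measurable h := by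
    have := (hq.stronglyMeasurable).integral_kernel_prod_right (κ := μ)
    exact this.measurable
  have hh01 : ∀ z, h z ∈ Set.Icc (0:ℝ) 1 := by
    intro z
    constructor
    · exact integral_nonneg fun θ => (hq01 z θ).1
    · calc ∫ θ, q z θ ∂(μ z) ≤ ∫ _, (1:ℝ) ∂(μ z) :=
            integral_mono_of_nonneg (ae_of_all _ fun θ => (hq01 z θ).1)
              (integrable_const 1) (ae_of_all _ fun θ => (hq01 z θ).2)
        _ = 1 := by simp
  have hhint : Integrable h P :=
    ⟨hhmeas.aestronglyMeasurable, HasFiniteIntegral.of_bounded (C := 1)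
      (ae_of_all _ fun z => by
        rw [Real.norm_eq_abs, abs_le]
        exact ⟨by linarith [(hh01 z).1], (hh01 z).2⟩)⟩
  -- step 1: pointwise DP bound, then integrate
  have step1 : (∫ z, h z ∂P) ≤ ∫ z, (1 - f (t z)) ∂P := by
    refine integral_mono hhint ((integrable_const 1).sub hftint) fun z => ?_
    exact hDP z (q z) (hqz z) (hq01 z)
  have step1' : (∫ z, h z ∂P) ≤ 1 - ∫ z, f (t z) ∂P := by
    rw [integral_sub (integrable_const 1) hftint] at step1
    simpa using step1
  -- step 2: ∫ t dP ≤ B by Fubini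
  have hqint : Integrable (Function.uncurry q) (P.prod ν) :=
    ⟨hq.aestronglyMeasurable, HasFiniteIntegral.of_bounded (C := 1)
      (ae_of_all _ fun p => by
        simp only [Real.norm_eq_abs, abs_le, Function.uncurry]
        exact ⟨by linarith [(hq01 p.1 p.2).1], (hq01 p.1 p.2).2⟩)⟩
  have hswap : (∫ z, t z ∂P) = ∫ θ, g θ ∂ν := by
    exact integral_integral_swap hqint
  have hintt01 : (∫ z, t z ∂P) ∈ Set.Icc (0:ℝ) 1 := by
    constructor
    · exact integral_nonneg fun z => (ht01 z).1
    · calc ∫ z, t z ∂P ≤ ∫ _, (1:ℝ) ∂P :=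
            integral_mono htint (integrable_const 1) fun z => (ht01 z).2
        _ = 1 := by simp
  have step2 : (∫ z, t z ∂P) ≤ B := by
    rw [hswap, hB]
    have hgmeas : Measurable g := by
      have hsw : StronglyMeasurable (Function.uncurry fun (θ : Θ) (z : D) => q z θ) :=
        (hq.comp measurable_swap).stronglyMeasurable
      have := hsw.integral_kernel_prod_right (κ := Kernel.const Θ P)
      simpa using this.measurable
    have hgint : Integrable g ν :=
      ⟨hgmeas.aestronglyMeasurable, HasFiniteIntegral.of_bounded (C := 1)
        (ae_of_all _ fun θ => by
          rw [Real.norm_eq_abs, abs_le]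
          exact ⟨by linarith [(hg01 θ).1], (hg01 θ).2⟩)⟩
    calc ∫ θ, g θ ∂ν ≤ ∫ _, ⨆ θ : Θ, g θ ∂ν :=
          integral_mono hgint (integrable_const _) fun θ => le_ciSup hbdd θ
      _ = ⨆ θ : Θ, g θ := by simp
  -- step 3: Jensen
  have jensen : f (∫ z, t z ∂P) ≤ ∫ z, f (t z) ∂P :=
    hconv.map_integral_le hcont isClosed_Icc (ae_of_all _ fun z => ht01 z) htint hftint
  -- combine
  have hfB : f B ≤ f (∫ z, t z ∂P) := hanti hintt01 hB01 step2
  have : (∫ z, h z ∂P) ≤ 1 - f B := le_trans step1' (by linarith)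
  linarith
end

section
/- Let D be a nonempty measurable space, let f be a trade-off function, let P be a probability measure on D, let ℓ : D × D → ℝ be jointly measurable, let γ ∈ ℝ, let ρ be a Markov kernel from D to D, and let ν be a probability measure on D such that for every z ∈ D the pair (ν, ρ(z)) satisfies the f-DP inequality. Then the strong reconstruction success probability satisfies ∫_D ρ(z)({ẑ ∈ D : ℓ(z,ẑ) ≤ γ}) dP(z) ≤ 1 − f( sup_{ẑ ∈ D} P({z ∈ D : ℓ(z,ẑ) ≤ γ}) ). -/
open MeasureTheory ProbabilityTheory

/-- SRR bullet of Theorem 3: `f`-DP bound on strong reconstruction success. -/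
theorem stmt_5 {D : Type*} [MeasurableSpace D] [Nonempty D]
    (f : ℝ → ℝ) (hf : IsTradeoff f)
    (P : Measure D) [IsProbabilityMeasure P]
    (ℓ : D → D → ℝ) (hℓ : Measurable (Function.uncurry ℓ)) (γ : ℝ)
    (ρ : Kernel D D) [IsMarkovKernel ρ]
    (ν : Measure D) [IsProbabilityMeasure ν]
    (hDP : ∀ z : D, FDPIneq f ν (ρ z)) :
    ∫ z, ((ρ z) {zhat : D | ℓ z zhat ≤ γ}).toReal ∂P ≤
      1 - f (⨆ zhat : D, (P {z : D | ℓ z zhat ≤ γ}).toReal) := by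
  classical
  have hf_conv := hf.1
  have hf_cont := hf.2.1
  have hf_anti := hf.2.2.1
  have hf_rng := hf.2.2.2
  set s : Set (D × D) := {p : D × D | ℓ p.1 p.2 ≤ γ} with hs_def
  have hs : MeasurableSet s := hℓ measurableSet_Iic
  have hsecA : ∀ z : D, MeasurableSet {zhat : D | ℓ z zhat ≤ γ} := fun z =>
    measurable_prodMk_left hs
  set g : D → ℝ := fun z => (ν {zhat : D | ℓ z zhat ≤ γ}).toReal with hg_def
  have hg_meas : Measurable g :=
    (measurable_measure_prodMk_left (ν := ν) hs).ennreal_toReal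
  have hg_mem : ∀ z, g z ∈ Set.Icc (0:ℝ) 1 := by
    intro z
    refine ⟨ENNReal.toReal_nonneg, ?_⟩
    simpa using ENNReal.toReal_mono ENNReal.one_ne_top (prob_le_one (μ := ν))
  -- pointwise f-DP bound
  have hpt : ∀ z : D, ((ρ z) {zhat : D | ℓ z zhat ≤ γ}).toReal ≤ 1 - f (g z) := by
    intro z
    have hA := hsecA z
    have h := hDP z (Set.indicator {zhat : D | ℓ z zhat ≤ γ} 1)
      ((measurable_one).indicator hA)
      (by
        intro θ
        by_cases hθ : θ ∈ {zhat : D | ℓ z zhat ≤ γ} <;>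
          simp [Set.indicator_apply, hθ])
    rw [integral_indicator_one hA, integral_indicator_one hA] at h
    exact h
  -- sup bounds
  set S : ℝ := ⨆ zhat : D, (P {z : D | ℓ z zhat ≤ γ}).toReal with hS_def
  have hterm_le_one : ∀ zhat : D, (P {z : D | ℓ z zhat ≤ γ}).toReal ≤ 1 := by
    intro zhat
    simpa using ENNReal.toReal_mono ENNReal.one_ne_top (prob_le_one (μ := P))
  have hbdd : BddAbove (Set.range fun zhat : D => (P {z : D | ℓ z zhat ≤ γ}).toReal) := by
    refine ⟨1, ?_⟩
    rintro _ ⟨zhat, rfl⟩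
    exact hterm_le_one zhat
  obtain ⟨z0⟩ := ‹Nonempty D›
  have hS0 : 0 ≤ S :=
    le_trans ENNReal.toReal_nonneg (le_ciSup hbdd z0)
  have hS1 : S ≤ 1 := ciSup_le hterm_le_one
  -- m = ∫ g dP ≤ S via Tonelli
  set m : ℝ := ∫ z, g z ∂P with hm_def
  have hm_eq : m = (∫⁻ z, ν (Prod.mk z ⁻¹' s) ∂P).toReal := by
    rw [hm_def]
    rw [← integral_toReal ((measurable_measure_prodMk_left (ν := ν) hs).aemeasurable)
      (Filter.Eventually.of_forall fun z => lt_of_le_of_lt (prob_le_one) ENNReal.one_lt_top)]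
    rfl
  have hmS : m ≤ S := by
    rw [hm_eq, ← Measure.prod_apply hs, Measure.prod_apply_symm hs]
    have hle : ∫⁻ zhat, P ((fun z => (z, zhat)) ⁻¹' s) ∂ν ≤ ENNReal.ofReal S := by
      calc ∫⁻ zhat, P ((fun z => (z, zhat)) ⁻¹' s) ∂ν
          ≤ ∫⁻ _, ENNReal.ofReal S ∂ν := by
            refine lintegral_mono fun zhat => ?_
            rw [ENNReal.le_ofReal_iff_toReal_le (measure_ne_top _ _) hS0]
            exact le_ciSup hbdd zhat
        _ = ENNReal.ofReal S := by simp
    calc (∫⁻ zhat, P ((fun z => (z, zhat)) ⁻¹' s) ∂ν).toReal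
        ≤ (ENNReal.ofReal S).toReal := ENNReal.toReal_mono ENNReal.ofReal_ne_top hle
      _ = S := ENNReal.toReal_ofReal hS0
  have hm_mem : m ∈ Set.Icc (0:ℝ) 1 := by
    constructor
    · exact integral_nonneg fun z => (hg_mem z).1
    · exact hmS.trans hS1
  -- measurability of f ∘ g
  have hfg_meas : Measurable fun z => f (g z) := by
    have hcont : Continuous fun x : Set.Icc (0:ℝ) 1 => f x :=
      continuousOn_iff_continuous_restrict.mp hf_cont
    have : (fun z => f (g z)) =
        (fun x : Set.Icc (0:ℝ) 1 => f x) ∘ (fun z => (⟨g z, hg_mem z⟩ : Set.Icc (0:ℝ) 1)) := rfl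
    rw [this]
    exact hcont.measurable.comp (hg_meas.subtype_mk)
  have hfg_bdd : ∀ z, |f (g z)| ≤ 1 := by
    intro z
    have h := (hf_rng (g z) (hg_mem z)).1
    rw [abs_le]
    exact ⟨by linarith [h.1], h.2⟩
  have hfg_int : Integrable (fun z => f (g z)) P := by
    refine (integrable_const (1:ℝ)).mono' hfg_meas.aestronglyMeasurable ?_
    exact Filter.Eventually.of_forall fun z => by simpa using hfg_bdd z
  have hg_int : Integrable g P := by
    refine (integrable_const (1:ℝ)).mono' hg_meas.aestronglyMeasurable ?_
    refine Filter.Eventually.of_forall fun z => ?_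
    rw [Real.norm_eq_abs, abs_of_nonneg (hg_mem z).1]
    exact (hg_mem z).2
  -- Jensen
  have hjensen : f m ≤ ∫ z, f (g z) ∂P :=
    hf_conv.map_integral_le hf_cont isClosed_Icc
      (Filter.Eventually.of_forall hg_mem) hg_int hfg_int
  -- LHS integrable
  have hlhs_meas : Measurable fun z => ((ρ z) {zhat : D | ℓ z zhat ≤ γ}).toReal :=
    (Kernel.measurable_kernel_prodMk_left (κ := ρ) hs).ennreal_toReal
  have hlhs_int : Integrable (fun z => ((ρ z) {zhat : D | ℓ z zhat ≤ γ}).toReal) P := by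
    refine (integrable_const (1:ℝ)).mono' hlhs_meas.aestronglyMeasurable ?_
    refine Filter.Eventually.of_forall fun z => ?_
    rw [Real.norm_eq_abs, abs_of_nonneg ENNReal.toReal_nonneg]
    simpa using ENNReal.toReal_mono ENNReal.one_ne_top (prob_le_one (μ := ρ z))
  calc ∫ z, ((ρ z) {zhat : D | ℓ z zhat ≤ γ}).toReal ∂P
      ≤ ∫ z, (1 - f (g z)) ∂P := by
        refine integral_mono hlhs_int ((integrable_const (1:ℝ)).sub hfg_int) hpt
    _ = 1 - ∫ z, f (g z) ∂P := by
        rw [integral_sub (integrable_const 1) hfg_int]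
        simp
    _ ≤ 1 - f m := by linarith [hjensen]
    _ ≤ 1 - f S := by
        have := hf_anti hm_mem ⟨hS0, hS1⟩ hmS
        linarith
end

section
/- Let D be a measurable space, let k ≥ 1, let A = Fin k be the (finite, discrete) attribute space, let f be a trade-off function, let P be a probability measure on D, let a : D → A be measurable, let ρ be a Markov kernel from D to A, and let ν be a probability measure on A such that for every z ∈ D the pair (ν, ρ(z)) satisfies the f-DP inequality. Then the strong attribute-inference success probability satisfies ∫_D ρ(z)({a(z)}) dP(z) ≤ 1 − f( max_{â ∈ A} P({z ∈ D : a(z) = â}) ). -/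
/-!
Testing the `f`-DP inequality of `(ν, ρ z)` against the indicator of `{a z}` gives
`ρ z {a z} ≤ 1 - f (ν {a z})`. Averaging over `z ~ P` turns the right-hand side into
`1 - ∑ b, w b * f (ν {b})` with `w b = P (a = b)`; by Jensen this is at most
`1 - f (∑ b, w b * ν {b})`, and since `ν` is a probability vector, `∑ b, w b * ν {b} ≤ max w`,
so antitonicity of `f` finishes the proof.
-/

open MeasureTheory ProbabilityTheory Finset

lemma FDPIneq.measureReal_le {Θ : Type*} [MeasurableSpace Θ] {f : ℝ → ℝ} {P Q : Measure Θ}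
    (h : FDPIneq f P Q) {s : Set Θ} (hs : MeasurableSet s) :
    Q.real s ≤ 1 - f (P.real s) := by
  have hφ : ∀ θ, s.indicator 1 θ ∈ Set.Icc (0 : ℝ) 1 := fun θ => by
    by_cases hθ : θ ∈ s <;> simp [hθ]
  have := h (s.indicator 1) (measurable_const.indicator hs) hφ
  rwa [integral_indicator_one hs, integral_indicator_one hs] at this

section FiniteValued

variable {D α : Type*} [MeasurableSpace D] [Fintype α] [MeasurableSpace α]
  [MeasurableSingletonClass α] (P : Measure D) [IsFiniteMeasure P] {a : D → α}

lemma integrable_comp_of_fintype (ha : Measurable a) (h : α → ℝ) :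
    Integrable (fun z => h (a z)) P :=
  Integrable.of_finite.comp_measurable ha

lemma integral_comp_eq_sum (ha : Measurable a) (h : α → ℝ) :
    ∫ z, h (a z) ∂P = ∑ b, P.real (a ⁻¹' {b}) * h b := by
  rw [← integral_map ha.aemeasurable (measurable_of_countable h).aestronglyMeasurable,
    integral_fintype Integrable.of_finite]
  simp only [map_measureReal_apply ha (measurableSet_singleton _), smul_eq_mul]

lemma sum_measureReal_fiber [IsProbabilityMeasure P] (ha : Measurable a) :
    ∑ b, P.real (a ⁻¹' {b}) = 1 := by
  simpa using (integral_comp_eq_sum P ha 1).symm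

end FiniteValued

lemma sum_mul_le_iSup {ι : Type*} [Fintype ι] (w : ι → ℝ) {x : ι → ℝ}
    (hx0 : ∀ i, 0 ≤ x i) (hx1 : ∑ i, x i = 1) :
    ∑ i, w i * x i ≤ ⨆ i, w i :=
  calc ∑ i, w i * x i
      ≤ ∑ i, (⨆ j, w j) * x i := by
        gcongr with i
        · exact hx0 i
        · exact le_ciSup (Set.finite_range w).bddAbove i
    _ = ⨆ j, w j := by rw [← mul_sum, hx1, mul_one]

lemma ConvexOn.map_iSup_le_sum_mul_of_antitoneOn {ι : Type*} [Fintype ι] {f : ℝ → ℝ}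
    (hconv : ConvexOn ℝ (Set.Icc 0 1) f) (hanti : AntitoneOn f (Set.Icc 0 1))
    {w x : ι → ℝ} (hw0 : ∀ i, 0 ≤ w i) (hw1 : ∑ i, w i = 1)
    (hx0 : ∀ i, 0 ≤ x i) (hx1 : ∑ i, x i = 1) :
    f (⨆ i, w i) ≤ ∑ i, w i * f (x i) := by
  have hx_le : ∀ i, x i ≤ 1 := fun i =>
    hx1 ▸ single_le_sum (fun j _ => hx0 j) (mem_univ i)
  have hmean_nonneg : 0 ≤ ∑ i, w i * x i := sum_nonneg fun i _ => mul_nonneg (hw0 i) (hx0 i)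
  have hmean_le := sum_mul_le_iSup w hx0 hx1
  have hsup_le : ⨆ i, w i ≤ 1 :=
    Real.iSup_le (fun i => hw1 ▸ single_le_sum (fun j _ => hw0 j) (mem_univ i)) zero_le_one
  calc f (⨆ i, w i)
      ≤ f (∑ i, w i * x i) :=
        hanti ⟨hmean_nonneg, hmean_le.trans hsup_le⟩ ⟨hmean_nonneg.trans hmean_le, hsup_le⟩
          hmean_le
    _ ≤ ∑ i, w i * f (x i) := by
        simpa only [smul_eq_mul] using
          hconv.map_sum_le (fun i _ => hw0 i) hw1 fun i _ => ⟨hx0 i, hx_le i⟩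

theorem stmt_6_general {D : Type*} [MeasurableSpace D]
    (k : ℕ)
    (f : ℝ → ℝ) (hf : IsTradeoff f)
    (P : Measure D) [IsProbabilityMeasure P]
    (a : D → Fin k) (ha : Measurable a)
    (ρ : Kernel D (Fin k))
    (ν : Measure (Fin k)) [IsProbabilityMeasure ν]
    (hDP : ∀ z : D, FDPIneq f ν (ρ z)) :
    ∫ z, ((ρ z) {a z}).toReal ∂P ≤
      1 - f (⨆ ahat : Fin k, (P {z : D | a z = ahat}).toReal) := by
  obtain ⟨hconv, -, hanti, -⟩ := hf
  have hpointwise : ∀ z, (ρ z).real {a z} ≤ 1 - f (ν.real {a z}) := fun z =>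
    (hDP z).measureReal_le (measurableSet_singleton _)
  calc ∫ z, (ρ z).real {a z} ∂P
      ≤ ∫ z, 1 - f (ν.real {a z}) ∂P :=
        integral_mono_of_nonneg (ae_of_all _ fun _ => measureReal_nonneg)
          (integrable_comp_of_fintype P ha fun b => 1 - f (ν.real {b})) (ae_of_all _ hpointwise)
    _ = 1 - ∑ b, P.real (a ⁻¹' {b}) * f (ν.real {b}) := by
        rw [integral_comp_eq_sum P ha fun b => 1 - f (ν.real {b})]
        simp only [mul_sub, mul_one, sum_sub_distrib, sum_measureReal_fiber P ha]
    _ ≤ 1 - f (⨆ b, P.real (a ⁻¹' {b})) :=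
        sub_le_sub_left (hconv.map_iSup_le_sum_mul_of_antitoneOn hanti
          (fun _ => measureReal_nonneg) (sum_measureReal_fiber P ha)
          (fun _ => measureReal_nonneg) (by simp)) 1

/-- SAI bullet of Theorem 3: `f`-DP bound on strong attribute-inference success,
with attribute space `Fin k`. -/
theorem stmt_6 {D : Type*} [MeasurableSpace D]
    (k : ℕ) (hk : 1 ≤ k)
    (f : ℝ → ℝ) (hf : IsTradeoff f)
    (P : Measure D) [IsProbabilityMeasure P]
    (a : D → Fin k) (ha : Measurable a)
    (ρ : Kernel D (Fin k)) [IsMarkovKernel ρ]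
    (ν : Measure (Fin k)) [IsProbabilityMeasure ν]
    (hDP : ∀ z : D, FDPIneq f ν (ρ z)) :
    ∫ z, ((ρ z) {a z}).toReal ∂P ≤
      1 - f (⨆ ahat : Fin k, (P {z : D | a z = ahat}).toReal) :=
  stmt_6_general k f hf P a ha ρ ν hDP
end

section
/- Let D and Θ be measurable spaces with Θ nonempty, let η ≥ 0, let μ be a Markov kernel from D to Θ, and let ν be a probability measure on Θ such that for every z ∈ D and every measurable set E ⊆ Θ, (μ(z))(E) ≤ ν(E) + η. Then for every probability measure P on D and every jointly measurable q : D × Θ → [0,1], ∫_D ∫_Θ q(z,θ) d(μ(z))(θ) dP(z) − sup_{θ ∈ Θ} ∫_D q(z,θ) dP(z) ≤ η. -/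
open MeasureTheory ProbabilityTheory

/-- Key lemma: if `μ E ≤ ν E + η` for all measurable `E`, then integrals of `[0,1]`-valued
functions differ by at most `η`. -/
lemma tv_integral_le {Θ : Type*} [MeasurableSpace Θ]
    (η : ℝ) (hη : 0 ≤ η) (μ ν : Measure Θ) [IsProbabilityMeasure μ] [IsProbabilityMeasure ν]
    (h : ∀ E : Set Θ, MeasurableSet E → μ E ≤ ν E + ENNReal.ofReal η)
    (g : Θ → ℝ) (hg : Measurable g) (h0 : ∀ θ, 0 ≤ g θ) (h1 : ∀ θ, g θ ≤ 1) :
    ∫ θ, g θ ∂μ ≤ (∫ θ, g θ ∂ν) + η := by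
  have hμlayer := lintegral_eq_lintegral_meas_lt μ (ae_of_all _ h0) hg.aemeasurable
  have hνlayer := lintegral_eq_lintegral_meas_lt ν (ae_of_all _ h0) hg.aemeasurable
  have hind : ∫⁻ t in Set.Ioi (0:ℝ),
      (Set.Ioo (0:ℝ) 1).indicator (fun _ => ENNReal.ofReal η) t = ENNReal.ofReal η := by
    rw [lintegral_indicator measurableSet_Ioo _, lintegral_const,
      Measure.restrict_restrict measurableSet_Ioo, Measure.restrict_apply MeasurableSet.univ]
    have : Set.Ioo (0:ℝ) 1 ∩ Set.Ioi 0 = Set.Ioo 0 1 := by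
      ext x; simp +contextual [Set.mem_Ioo, and_assoc]
    simp [this]
  have hle : ∫⁻ θ, ENNReal.ofReal (g θ) ∂μ ≤
      (∫⁻ θ, ENNReal.ofReal (g θ) ∂ν) + ENNReal.ofReal η := by
    rw [hμlayer, hνlayer, ← hind,
      ← lintegral_add_right _ ((measurable_const).indicator measurableSet_Ioo)]
    refine setLIntegral_mono' measurableSet_Ioi (fun t ht => ?_)
    by_cases hlt : t < 1
    · have : (Set.Ioo (0:ℝ) 1).indicator (fun _ => ENNReal.ofReal η) t = ENNReal.ofReal η := by
        rw [Set.indicator_of_mem]; exact ⟨ht, hlt⟩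
      rw [this]
      exact h _ (hg measurableSet_Ioi)
    · have hempty : {a : Θ | t < g a} = ∅ := by
        ext a; simp only [Set.mem_setOf_eq, Set.mem_empty_iff_false, iff_false, not_lt]
        exact (h1 a).trans (not_lt.mp hlt)
      simp [hempty]
  have hνfin : ∫⁻ θ, ENNReal.ofReal (g θ) ∂ν ≤ 1 := by
    calc ∫⁻ θ, ENNReal.ofReal (g θ) ∂ν ≤ ∫⁻ _, 1 ∂ν :=
          lintegral_mono fun θ => ENNReal.ofReal_le_one.mpr (h1 θ)
      _ = 1 := by simp
  have hμint : ∫ θ, g θ ∂μ = (∫⁻ θ, ENNReal.ofReal (g θ) ∂μ).toReal :=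
    integral_eq_lintegral_of_nonneg_ae (ae_of_all _ h0) hg.aestronglyMeasurable
  have hνint : ∫ θ, g θ ∂ν = (∫⁻ θ, ENNReal.ofReal (g θ) ∂ν).toReal :=
    integral_eq_lintegral_of_nonneg_ae (ae_of_all _ h0) hg.aestronglyMeasurable
  rw [hμint, hνint]
  have hfin : (∫⁻ θ, ENNReal.ofReal (g θ) ∂ν) + ENNReal.ofReal η ≠ ⊤ := by
    exact ENNReal.add_ne_top.mpr ⟨(hνfin.trans_lt ENNReal.one_lt_top).ne, ENNReal.ofReal_ne_top⟩
  calc (∫⁻ θ, ENNReal.ofReal (g θ) ∂μ).toReal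
      ≤ ((∫⁻ θ, ENNReal.ofReal (g θ) ∂ν) + ENNReal.ofReal η).toReal :=
        ENNReal.toReal_mono hfin hle
    _ = (∫⁻ θ, ENNReal.ofReal (g θ) ∂ν).toReal + η := by
        rw [ENNReal.toReal_add (hνfin.trans_lt ENNReal.one_lt_top).ne ENNReal.ofReal_ne_top,
          ENNReal.toReal_ofReal hη]

/-- Theorem B.5: `η`-TV privacy bounds the advantage of any attack by `η`. -/
theorem stmt_7 {D Θ : Type*} [MeasurableSpace D] [MeasurableSpace Θ] [Nonempty Θ]
    (η : ℝ) (hη : 0 ≤ η)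
    (μ : Kernel D Θ) [IsMarkovKernel μ]
    (ν : Measure Θ) [IsProbabilityMeasure ν]
    (hTV : ∀ z : D, ∀ E : Set Θ, MeasurableSet E → (μ z) E ≤ ν E + ENNReal.ofReal η)
    (P : Measure D) [IsProbabilityMeasure P]
    (q : D → Θ → ℝ) (hq : Measurable (Function.uncurry q))
    (hq01 : ∀ z θ, q z θ ∈ Set.Icc (0:ℝ) 1) :
    (∫ z, ∫ θ, q z θ ∂(μ z) ∂P) - (⨆ θ : Θ, ∫ z, q z θ ∂P) ≤ η := by
  have h0 : ∀ z θ, 0 ≤ q z θ := fun z θ => (hq01 z θ).1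
  have h1 : ∀ z θ, q z θ ≤ 1 := fun z θ => (hq01 z θ).2
  have hqz : ∀ z : D, Measurable (q z) := fun z =>
    hq.comp (measurable_prodMk_left)
  have hqθ : ∀ θ : Θ, Measurable (fun z => q z θ) := fun θ =>
    hq.comp (measurable_prodMk_right)
  -- integrability of uncurry q on P.prod ν
  have hquncint : Integrable (Function.uncurry q) (P.prod ν) := by
    refine Integrable.mono' (integrable_const 1) hq.aestronglyMeasurable
      (ae_of_all _ fun p => ?_)
    have : Function.uncurry q p = q p.1 p.2 := rfl
    rw [this, Real.norm_eq_abs, abs_of_nonneg (h0 p.1 p.2)]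
    exact h1 p.1 p.2
  -- step 1: inner integral bound
  have hstep1 : ∀ z, ∫ θ, q z θ ∂(μ z) ≤ (∫ θ, q z θ ∂ν) + η := fun z =>
    tv_integral_le η hη (μ z) ν (hTV z) (q z) (hqz z) (h0 z) (h1 z)
  -- integrability of both sides as functions of z
  have hmeas1 : AEStronglyMeasurable (fun z => ∫ θ, q z θ ∂(μ z)) P :=
    (hq.stronglyMeasurable.integral_kernel_prod_right').aestronglyMeasurable
  have hint1 : Integrable (fun z => ∫ θ, q z θ ∂(μ z)) P := by
    refine Integrable.mono' (integrable_const 1) hmeas1 (ae_of_all _ fun z => ?_)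
    rw [Real.norm_eq_abs, abs_of_nonneg (integral_nonneg (h0 z))]
    calc ∫ θ, q z θ ∂(μ z) ≤ ∫ _θ, (1:ℝ) ∂(μ z) :=
          integral_mono (Integrable.mono' (integrable_const 1)
            (hqz z).aestronglyMeasurable (ae_of_all _ fun θ => by
              rw [Real.norm_eq_abs, abs_of_nonneg (h0 z θ)]; exact h1 z θ))
            (integrable_const 1) (h1 z)
      _ = 1 := by simp
  have hint2 : Integrable (fun z => ∫ θ, q z θ ∂ν) P := by
    have hmeas2 : AEStronglyMeasurable (fun z => ∫ θ, q z θ ∂ν) P :=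
      (hq.stronglyMeasurable.integral_prod_right').aestronglyMeasurable
    refine Integrable.mono' (integrable_const 1) hmeas2 (ae_of_all _ fun z => ?_)
    rw [Real.norm_eq_abs, abs_of_nonneg (integral_nonneg (h0 z))]
    calc ∫ θ, q z θ ∂ν ≤ ∫ _θ, (1:ℝ) ∂ν :=
          integral_mono (Integrable.mono' (integrable_const 1)
            (hqz z).aestronglyMeasurable (ae_of_all _ fun θ => by
              rw [Real.norm_eq_abs, abs_of_nonneg (h0 z θ)]; exact h1 z θ))
            (integrable_const 1) (h1 z)
      _ = 1 := by simp
  have hstep2 : (∫ z, ∫ θ, q z θ ∂(μ z) ∂P) ≤ (∫ z, ∫ θ, q z θ ∂ν ∂P) + η := by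
    calc (∫ z, ∫ θ, q z θ ∂(μ z) ∂P) ≤ ∫ z, ((∫ θ, q z θ ∂ν) + η) ∂P :=
          integral_mono hint1 (hint2.add (integrable_const η)) hstep1
      _ = (∫ z, ∫ θ, q z θ ∂ν ∂P) + η := by
          rw [integral_add hint2 (integrable_const η)]; simp
  -- Fubini
  have hfub : (∫ z, ∫ θ, q z θ ∂ν ∂P) = ∫ θ, ∫ z, q z θ ∂P ∂ν :=
    integral_integral_swap hquncint
  -- each slice integral is at most the sup
  have hbdd : BddAbove (Set.range fun θ => ∫ z, q z θ ∂P) := by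
    refine ⟨1, fun x hx => ?_⟩
    obtain ⟨θ, rfl⟩ := hx
    calc ∫ z, q z θ ∂P ≤ ∫ _z, (1:ℝ) ∂P :=
          integral_mono (Integrable.mono' (integrable_const 1)
            (hqθ θ).aestronglyMeasurable (ae_of_all _ fun z => by
              rw [Real.norm_eq_abs, abs_of_nonneg (h0 z θ)]; exact h1 z θ))
            (integrable_const 1) (fun z => h1 z θ)
      _ = 1 := by simp
  have hstep3 : (∫ θ, ∫ z, q z θ ∂P ∂ν) ≤ ⨆ θ : Θ, ∫ z, q z θ ∂P := by
    calc (∫ θ, ∫ z, q z θ ∂P ∂ν) ≤ ∫ _θ, (⨆ θ : Θ, ∫ z, q z θ ∂P) ∂ν := by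
          refine integral_mono ?_ (integrable_const _) (fun θ => le_ciSup hbdd θ)
          · simpa using hquncint.swap.integral_prod_left
      _ = ⨆ θ : Θ, ∫ z, q z θ ∂P := by simp
  linarith [hstep2, hfub ▸ hstep3]
end

section
/- Let D (records) and V (predicates) be nonempty measurable spaces, let η ≥ 0, let P be a probability measure on D, let e : D × V → {0,1} be jointly measurable, let ρ be a Markov kernel from D to V, and let ν be a probability measure on V such that for every z ∈ D and every measurable set E ⊆ V, (ρ(z))(E) ≤ ν(E) + η. Then ∫_D ρ(z)({v ∈ V : e(z,v) = 1}) dP(z) − sup_{v ∈ V} P({z ∈ D : e(z,v) = 1}) ≤ η. -/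
/-!
Let `S = {(z, v) | e z v}`. Integrating the privacy bound over `z` gives
`succ ≤ ∫ ν(S_z) dP + η`, and `∫ ν(S_z) dP = (P ⊗ ν)(S) = ∫ P(S^v) dν` by Fubini. The latter is the
success of an adversary that ignores the mechanism and draws its predicate from `ν`, so it is at
most the baseline `sup_v P(S^v)`.
-/

open MeasureTheory ProbabilityTheory
open scoped ENNReal

section

variable {α β : Type*} [MeasurableSpace α] [MeasurableSpace β]

lemma lintegral_measure_prodMk_left_le_of_le_add {κ : α → Measure β} {ν : Measure β} {c : ℝ≥0∞}
    (h : ∀ a E, MeasurableSet E → κ a E ≤ ν E + c) (μ : Measure α) {S : Set (α × β)}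
    (hS : MeasurableSet S) :
    ∫⁻ a, κ a (Prod.mk a ⁻¹' S) ∂μ ≤ ∫⁻ a, ν (Prod.mk a ⁻¹' S) ∂μ + c * μ Set.univ := by
  calc ∫⁻ a, κ a (Prod.mk a ⁻¹' S) ∂μ
      ≤ ∫⁻ a, (ν (Prod.mk a ⁻¹' S) + c) ∂μ :=
        lintegral_mono fun a => h a _ (measurable_prodMk_left hS)
    _ = ∫⁻ a, ν (Prod.mk a ⁻¹' S) ∂μ + c * μ Set.univ := by
        rw [lintegral_add_right _ measurable_const, lintegral_const]

lemma lintegral_measure_prodMk_left_le_iSup (μ : Measure α) [SFinite μ] (ν : Measure β) [SFinite ν]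
    {S : Set (α × β)} (hS : MeasurableSet S) :
    ∫⁻ a, ν (Prod.mk a ⁻¹' S) ∂μ ≤ (⨆ b, μ ((·, b) ⁻¹' S)) * ν Set.univ := by
  rw [← Measure.prod_apply hS, Measure.prod_apply_symm hS, ← lintegral_const]
  exact lintegral_mono fun b => le_iSup (fun b => μ ((·, b) ⁻¹' S)) b

end

theorem stmt_8_general {D V : Type*} [MeasurableSpace D] [MeasurableSpace V]
    (η : ℝ) (hη : 0 ≤ η)
    (P : Measure D) [IsProbabilityMeasure P]
    (e : D → V → Bool) (he : Measurable (Function.uncurry e))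
    (ρ : Kernel D V) [IsMarkovKernel ρ]
    (ν : Measure V) [IsProbabilityMeasure ν]
    (hTV : ∀ z : D, ∀ E : Set V, MeasurableSet E → (ρ z) E ≤ ν E + ENNReal.ofReal η) :
    (∫ z, ((ρ z) {v : V | e z v = true}).toReal ∂P) -
      (⨆ v : V, (P {z : D | e z v = true}).toReal) ≤ η := by
  set S : Set (D × V) := {p | e p.1 p.2 = true}
  have hS : MeasurableSet S := he (measurableSet_singleton true)
  have hsucc : ∫⁻ z, ρ z (Prod.mk z ⁻¹' S) ∂P ≤ (⨆ v, P ((·, v) ⁻¹' S)) + ENNReal.ofReal η :=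
    calc ∫⁻ z, ρ z (Prod.mk z ⁻¹' S) ∂P
        ≤ ∫⁻ z, ν (Prod.mk z ⁻¹' S) ∂P + ENNReal.ofReal η := by
          simpa using lintegral_measure_prodMk_left_le_of_le_add hTV P hS
      _ ≤ (⨆ v, P ((·, v) ⁻¹' S)) + ENNReal.ofReal η := by
          gcongr
          simpa using lintegral_measure_prodMk_left_le_iSup P ν hS
  have hbase_ne_top : (⨆ v, P ((·, v) ⁻¹' S)) ≠ ∞ :=
    ne_top_of_le_ne_top ENNReal.one_ne_top (iSup_le fun _ => prob_le_one)
  change ∫ z, (ρ z (Prod.mk z ⁻¹' S)).toReal ∂P - ⨆ v, (P ((·, v) ⁻¹' S)).toReal ≤ η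
  rw [integral_toReal (Kernel.measurable_kernel_prodMk_left hS).aemeasurable
      (ae_of_all _ fun _ => measure_lt_top _ _),
    ← ENNReal.toReal_iSup fun _ => measure_ne_top _ _, sub_le_iff_le_add',
    ← ENNReal.toReal_ofReal hη]
  exact ENNReal.toReal_le_add hsucc hbase_ne_top ENNReal.ofReal_ne_top

/-- SPSO bullet of Theorem 5: `η`-TV privacy bounds the strong
predicate-singling-out advantage by `η`. `e z v = true` means predicate `v`
matches record `z`. -/
theorem stmt_8 {D V : Type*} [MeasurableSpace D] [MeasurableSpace V]
    [Nonempty D] [Nonempty V]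
    (η : ℝ) (hη : 0 ≤ η)
    (P : Measure D) [IsProbabilityMeasure P]
    (e : D → V → Bool) (he : Measurable (Function.uncurry e))
    (ρ : Kernel D V) [IsMarkovKernel ρ]
    (ν : Measure V) [IsProbabilityMeasure ν]
    (hTV : ∀ z : D, ∀ E : Set V, MeasurableSet E → (ρ z) E ≤ ν E + ENNReal.ofReal η) :
    (∫ z, ((ρ z) {v : V | e z v = true}).toReal ∂P) -
      (⨆ v : V, (P {z : D | e z v = true}).toReal) ≤ η :=
  stmt_8_general η hη P e he ρ ν hTV
end

section
/- Let D be a nonempty measurable space, let η ≥ 0, let P be a probability measure on D, let ℓ : D × D → ℝ be jointly measurable, let γ ∈ ℝ, let ρ be a Markov kernel from D to D, and let ν be a probability measure on D such that for every z ∈ D and every measurable set E ⊆ D, (ρ(z))(E) ≤ ν(E) + η. Then ∫_D ρ(z)({ẑ ∈ D : ℓ(z,ẑ) ≤ γ}) dP(z) − sup_{ẑ ∈ D} P({z ∈ D : ℓ(z,ẑ) ≤ γ}) ≤ η. -/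
/-!
Averaging the TV-privacy bound `ρ z E ≤ ν E + η` over the prior turns the success probability
into at most `η` plus the success of an adversary that ignores the mechanism and draws its guess
from `ν`. By Fubini that baseline success is a `ν`-average over guesses `ẑ` of `P {z | ℓ z ẑ ≤ γ}`,
which no average can push above the best fixed guess.
-/

open MeasureTheory ProbabilityTheory
open scoped ENNReal

section

variable {α β : Type*} [MeasurableSpace α] [MeasurableSpace β]

theorem lintegral_measure_prodMk_left_le_iSup_s9 (P : Measure α) [SFinite P]
    (ν : Measure β) [IsProbabilityMeasure ν] {s : Set (α × β)} (hs : MeasurableSet s) :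
    ∫⁻ x, ν (Prod.mk x ⁻¹' s) ∂P ≤ ⨆ y, P ((·, y) ⁻¹' s) :=
  calc ∫⁻ x, ν (Prod.mk x ⁻¹' s) ∂P
      = ∫⁻ y, P ((·, y) ⁻¹' s) ∂ν := by
        rw [← Measure.prod_apply hs, Measure.prod_apply_symm hs]
    _ ≤ ∫⁻ _, ⨆ y, P ((·, y) ⁻¹' s) ∂ν :=
        lintegral_mono fun y => le_iSup (fun y => P ((·, y) ⁻¹' s)) y
    _ = ⨆ y, P ((·, y) ⁻¹' s) := by simp

theorem lintegral_measure_prodMk_left_le_iSup_add (μ : α → Measure β)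
    (P : Measure α) [IsProbabilityMeasure P] (ν : Measure β) [IsProbabilityMeasure ν]
    {c : ℝ≥0∞} (hμ : ∀ x E, MeasurableSet E → μ x E ≤ ν E + c)
    {s : Set (α × β)} (hs : MeasurableSet s) :
    ∫⁻ x, μ x (Prod.mk x ⁻¹' s) ∂P ≤ (⨆ y, P ((·, y) ⁻¹' s)) + c :=
  calc ∫⁻ x, μ x (Prod.mk x ⁻¹' s) ∂P
      ≤ ∫⁻ x, ν (Prod.mk x ⁻¹' s) + c ∂P :=
        lintegral_mono fun x => hμ x _ (measurable_prodMk_left hs)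
    _ = ∫⁻ x, ν (Prod.mk x ⁻¹' s) ∂P + c := by
        rw [lintegral_add_right _ measurable_const, lintegral_const, measure_univ, mul_one]
    _ ≤ (⨆ y, P ((·, y) ⁻¹' s)) + c := by
        gcongr
        exact lintegral_measure_prodMk_left_le_iSup_s9 P ν hs

end

theorem stmt_9_general {D : Type*} [MeasurableSpace D]
    (η : ℝ) (hη : 0 ≤ η)
    (P : Measure D) [IsProbabilityMeasure P]
    (ℓ : D → D → ℝ) (hℓ : Measurable (Function.uncurry ℓ)) (γ : ℝ)
    (ρ : Kernel D D) [IsMarkovKernel ρ]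
    (ν : Measure D) [IsProbabilityMeasure ν]
    (hTV : ∀ z : D, ∀ E : Set D, MeasurableSet E → (ρ z) E ≤ ν E + ENNReal.ofReal η) :
    (∫ z, ((ρ z) {zhat : D | ℓ z zhat ≤ γ}).toReal ∂P) -
      (⨆ zhat : D, (P {z : D | ℓ z zhat ≤ γ}).toReal) ≤ η := by
  set s : Set (D × D) := {p | ℓ p.1 p.2 ≤ γ}
  have hs : MeasurableSet s := measurableSet_le hℓ measurable_const
  have hsup_ne_top : (⨆ zhat, P ((·, zhat) ⁻¹' s)) ≠ ∞ :=
    ne_top_of_le_ne_top ENNReal.one_ne_top (iSup_le fun _ => prob_le_one)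
  have hbound := ENNReal.toReal_mono (by finiteness)
    (lintegral_measure_prodMk_left_le_iSup_add (ρ ·) P ν hTV hs)
  rw [ENNReal.toReal_add hsup_ne_top ENNReal.ofReal_ne_top, ENNReal.toReal_ofReal hη,
    ENNReal.toReal_iSup fun _ => measure_ne_top _ _,
    ← integral_toReal (ρ.measurable_kernel_prodMk_left hs).aemeasurable
      (.of_forall fun _ => measure_lt_top _ _)] at hbound
  exact sub_le_iff_le_add'.2 hbound

/-- SRR bullet of Theorem 5: `η`-TV privacy bounds the strong
reconstruction-robustness advantage by `η`. -/
theorem stmt_9 {D : Type*} [MeasurableSpace D] [Nonempty D]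
    (η : ℝ) (hη : 0 ≤ η)
    (P : Measure D) [IsProbabilityMeasure P]
    (ℓ : D → D → ℝ) (hℓ : Measurable (Function.uncurry ℓ)) (γ : ℝ)
    (ρ : Kernel D D) [IsMarkovKernel ρ]
    (ν : Measure D) [IsProbabilityMeasure ν]
    (hTV : ∀ z : D, ∀ E : Set D, MeasurableSet E → (ρ z) E ≤ ν E + ENNReal.ofReal η) :
    (∫ z, ((ρ z) {zhat : D | ℓ z zhat ≤ γ}).toReal ∂P) -
      (⨆ zhat : D, (P {z : D | ℓ z zhat ≤ γ}).toReal) ≤ η :=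
  stmt_9_general η hη P ℓ hℓ γ ρ ν hTV
end

section
/- Let D be a measurable space, let k ≥ 1, let A = Fin k be the (finite, discrete) attribute space, let η ≥ 0, let P be a probability measure on D, let a : D → A be measurable, let ρ be a Markov kernel from D to A, and let ν be a probability measure on A such that for every z ∈ D and every set E ⊆ A, (ρ(z))(E) ≤ ν(E) + η. Then ∫_D ρ(z)({a(z)}) dP(z) − max_{â ∈ A} P({z ∈ D : a(z) = â}) ≤ η. -/
/-!
Applied to the singleton `{a z}`, TV privacy says that the adversary's success is at most the
success of the data-independent guess `ν`, plus `η`. A data-independent guess is correct with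
probability `∑ b, P (a = b) * ν {b}`, a convex combination of the `P (a = b)`, hence at most
their maximum.
-/

open MeasureTheory ProbabilityTheory

section

variable {D A : Type*} [MeasurableSpace D] [MeasurableSpace A]

theorem integral_toReal_le_integral_toReal_add (P : Measure D) [IsProbabilityMeasure P]
    {f g : D → ENNReal} {η : ℝ} (hη : 0 ≤ η) (hg : Integrable (fun z => (g z).toReal) P)
    (hg_ne_top : ∀ z, g z ≠ ⊤) (hfg : ∀ z, f z ≤ g z + ENNReal.ofReal η) :
    ∫ z, (f z).toReal ∂P ≤ ∫ z, (g z).toReal ∂P + η := by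
  have hpointwise : ∀ z, (f z).toReal ≤ (g z).toReal + η := fun z => by
    simpa [ENNReal.toReal_add (hg_ne_top z) ENNReal.ofReal_ne_top, hη] using
      ENNReal.toReal_mono (by simp [hg_ne_top z]) (hfg z)
  calc ∫ z, (f z).toReal ∂P ≤ ∫ z, ((g z).toReal + η) ∂P :=
        integral_mono_of_nonneg (.of_forall fun _ => ENNReal.toReal_nonneg)
          (hg.add (integrable_const η)) (.of_forall hpointwise)
    _ = ∫ z, (g z).toReal ∂P + η := by simp [integral_add hg (integrable_const η)]

variable [Fintype A] [MeasurableSingletonClass A]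

theorem integral_measureReal_singleton_comp_le_iSup (P : Measure D) [IsFiniteMeasure P]
    {a : D → A} (ha : Measurable a) (ν : Measure A) [IsProbabilityMeasure ν] :
    ∫ z, ν.real {a z} ∂P ≤ ⨆ b, P.real {z | a z = b} := by
  have hle_iSup : ∀ b, P.real {z | a z = b} ≤ ⨆ b, P.real {z | a z = b} :=
    le_ciSup (Set.finite_range _).bddAbove
  rw [← integral_map ha.aemeasurable
      (measurable_of_finite fun b => ν.real {b}).aestronglyMeasurable,
    integral_fintype Integrable.of_finite]
  simp only [smul_eq_mul]
  calc ∑ b, (P.map a).real {b} * ν.real {b}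
      ≤ ∑ b, (⨆ b, P.real {z | a z = b}) * ν.real {b} := by
        gcongr with b
        rw [map_measureReal_apply ha (measurableSet_singleton b)]
        exact hle_iSup b
    _ = ⨆ b, P.real {z | a z = b} := by simp [← Finset.mul_sum]

end

theorem stmt_10_general {D : Type*} [MeasurableSpace D]
    (k : ℕ)
    (η : ℝ) (hη : 0 ≤ η)
    (P : Measure D) [IsProbabilityMeasure P]
    (a : D → Fin k) (ha : Measurable a)
    (ρ : Kernel D (Fin k))
    (ν : Measure (Fin k)) [IsProbabilityMeasure ν]
    (hTV : ∀ z : D, ∀ E : Set (Fin k), (ρ z) E ≤ ν E + ENNReal.ofReal η) :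
    (∫ z, ((ρ z) {a z}).toReal ∂P) -
      (⨆ ahat : Fin k, (P {z : D | a z = ahat}).toReal) ≤ η := by
  have hbase := integral_measureReal_singleton_comp_le_iSup P ha ν
  have hν_int : Integrable (fun z => ν.real {a z}) P :=
    Integrable.comp_measurable (g := fun b => ν.real {b}) .of_finite ha
  have hTV_step := integral_toReal_le_integral_toReal_add P hη hν_int
    (fun z => measure_ne_top ν {a z}) (fun z => hTV z {a z})
  simp only [measureReal_def] at hbase hTV_step
  linarith

/-- SAI bullet of Theorem 5: `η`-TV privacy bounds the strong
attribute-inference advantage by `η`, with attribute space `Fin k`. -/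
theorem stmt_10 {D : Type*} [MeasurableSpace D]
    (k : ℕ) (hk : 1 ≤ k)
    (η : ℝ) (hη : 0 ≤ η)
    (P : Measure D) [IsProbabilityMeasure P]
    (a : D → Fin k) (ha : Measurable a)
    (ρ : Kernel D (Fin k)) [IsMarkovKernel ρ]
    (ν : Measure (Fin k)) [IsProbabilityMeasure ν]
    (hTV : ∀ z : D, ∀ E : Set (Fin k), (ρ z) E ≤ ν E + ENNReal.ofReal η) :
    (∫ z, ((ρ z) {a z}).toReal ∂P) -
      (⨆ ahat : Fin k, (P {z : D | a z = ahat}).toReal) ≤ η :=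
  stmt_10_general k η hη P a ha ρ ν hTV
end

section
/- Let Θ be a measurable space, let f be a trade-off function, and let μ₀, μ₁ be probability measures on Θ such that for every measurable φ : Θ → [0,1], ∫ φ dμ₀ ≤ 1 − f(∫ φ dμ₁). For π ∈ [0,1] define the Bayes error R_f(π) := inf_{α ∈ [0,1]} ( π·α + (1−π)·f(α) ). Then for every measurable g : Θ → [0,1], (1−π)·∫ (1 − g) dμ₀ + π·∫ g dμ₁ ≤ 1 − R_f(π). -/
open MeasureTheory ProbabilityTheory

/-- The Bayes error with prior `π` under trade-off curve `f`:
`R_f(π) = inf_{α ∈ [0,1]} (π α + (1 - π) f α)`. -/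
noncomputable def bayesError (f : ℝ → ℝ) (π : ℝ) : ℝ :=
  ⨅ α : Set.Icc (0:ℝ) 1, (π * (α : ℝ) + (1 - π) * f (α : ℝ))

/-- Theorem C.2: bound on attack success under a Bernoulli(π) prior via the Bayes error. -/
theorem stmt_11 {Θ : Type*} [MeasurableSpace Θ]
    (f : ℝ → ℝ) (hf : IsTradeoff f)
    (μ₀ μ₁ : Measure Θ) [IsProbabilityMeasure μ₀] [IsProbabilityMeasure μ₁]
    (hDP : ∀ φ : Θ → ℝ, Measurable φ → (∀ θ, φ θ ∈ Set.Icc (0:ℝ) 1) →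
      ∫ θ, φ θ ∂μ₀ ≤ 1 - f (∫ θ, φ θ ∂μ₁))
    (π : ℝ) (hπ : π ∈ Set.Icc (0:ℝ) 1)
    (g : Θ → ℝ) (hg : Measurable g) (hg01 : ∀ θ, g θ ∈ Set.Icc (0:ℝ) 1) :
    (1 - π) * (∫ θ, (1 - g θ) ∂μ₀) + π * (∫ θ, g θ ∂μ₁) ≤ 1 - bayesError f π := by
  obtain ⟨hconv, hcont, hanti, hbnd⟩ := hf
  have hφ : ∀ θ, (1 - g θ) ∈ Set.Icc (0:ℝ) 1 := fun θ => by
    have := hg01 θ; constructor <;> [linarith [this.2]; linarith [this.1]]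
  -- integrability of g w.r.t. both measures
  have hint : ∀ (μ : Measure Θ) [IsProbabilityMeasure μ], Integrable g μ := by
    intro μ _
    refine ⟨hg.aestronglyMeasurable, ?_⟩
    apply HasFiniteIntegral.of_bounded (C := 1)
    filter_upwards with θ
    have := hg01 θ
    rw [Real.norm_eq_abs, abs_le]; exact ⟨by linarith [this.1], this.2⟩
  have hint0 := hint μ₀
  have hint1 := hint μ₁
  have hsub : ∀ (μ : Measure Θ) [IsProbabilityMeasure μ],
      ∫ θ, (1 - g θ) ∂μ = 1 - ∫ θ, g θ ∂μ := by
    intro μ _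
    rw [integral_sub (integrable_const 1) (hint μ), integral_const]
    simp
  -- α := ∫ g dμ₁
  set α : ℝ := ∫ θ, g θ ∂μ₁ with hα
  have hα0 : 0 ≤ α := integral_nonneg fun θ => (hg01 θ).1
  have hα1 : α ≤ 1 := by
    calc α ≤ ∫ _ : Θ, (1:ℝ) ∂μ₁ := integral_mono hint1 (integrable_const 1) fun θ => (hg01 θ).2
    _ = 1 := by simp
  have hβ : (1 - α) ∈ Set.Icc (0:ℝ) 1 := ⟨by linarith, by linarith⟩
  -- apply hDP to 1 - g
  have hkey := hDP (fun θ => 1 - g θ) (measurable_const.sub hg) hφ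
  rw [hsub μ₀, hsub μ₁] at hkey
  -- bayesError ≤ value at β = 1 - α
  have hinf : bayesError f π ≤ π * (1 - α) + (1 - π) * f (1 - α) := by
    have hbdd : BddBelow (Set.range fun x : Set.Icc (0:ℝ) 1 =>
        π * (x : ℝ) + (1 - π) * f (x : ℝ)) := by
      refine ⟨0, ?_⟩
      rintro y ⟨x, rfl⟩
      have h1 := (hbnd x x.2).1.1
      have h2 := x.2.1
      show (0:ℝ) ≤ π * (x:ℝ) + (1 - π) * f (x:ℝ)
      nlinarith [mul_nonneg hπ.1 h2, mul_nonneg (by linarith [hπ.2] : (0:ℝ) ≤ 1 - π) h1]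
    exact ciInf_le hbdd ⟨1 - α, hβ⟩
  have hf1α := (hbnd (1 - α) hβ).1
  rw [hsub μ₀]
  nlinarith [mul_le_mul_of_nonneg_left hkey (by linarith [hπ.2] : (0:ℝ) ≤ 1 - π)]
end

section
/- Let n ≥ 1, let D and Θ be measurable spaces, let f be a trade-off function, and let M be a Markov kernel from Dⁿ (functions Fin n → D) to Θ satisfying f-DP with respect to the replace-one relation. Then for every probability measure P on D and every jointly measurable q : D × Θ → [0,1], the on-average train loss is bounded by the on-average test loss: ∫_{Dⁿ} ∫_Θ (1/n) Σ_{i=1}^{n} q(S_i, θ) d(M(S))(θ) dPⁿ(S) ≤ 1 − f( ∫_{Dⁿ} ∫_D ∫_Θ q(z, θ) d(M(S))(θ) dP(z) dPⁿ(S) ). -/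
open MeasureTheory ProbabilityTheory

/-!
Fix a coordinate `i`. Since `(S, z) ↦ S[i ↦ z]` pushes `Pⁿ ⊗ P` forward to `Pⁿ`, the expected
loss of `M S` on its own sample point `S i` equals the expected loss of `M (S[i ↦ z])` on a fresh
point `z`. For each `(S, z)` the datasets `S[i ↦ z]` and `S` differ in one coordinate, so testing
`M S` against `M (S[i ↦ z])` with `θ ↦ q z θ` bounds that loss by `1 - f (g (S, z))`, where
`g (S, z)` is the loss of `M S` on `z`. Jensen's inequality for the convex `f` moves the average
over `(S, z)` inside `f`, giving the test loss. Averaging over `i` finishes the proof.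
-/

open Set Function

section UnitIntervalValued

variable {X : Type*} [MeasurableSpace X] {μ : Measure X} {φ : X → ℝ}

lemma norm_le_one_of_mem_Icc {x : ℝ} (hx : x ∈ Icc (0:ℝ) 1) : ‖x‖ ≤ 1 := by
  rw [Real.norm_eq_abs, abs_le]
  exact ⟨by linarith [hx.1], hx.2⟩

lemma integrable_of_forall_mem_Icc [IsFiniteMeasure μ] (hφ : AEStronglyMeasurable φ μ)
    (h : ∀ x, φ x ∈ Icc (0:ℝ) 1) : Integrable φ μ :=
  .of_bound hφ 1 (ae_of_all _ fun x => norm_le_one_of_mem_Icc (h x))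

lemma integral_mem_Icc_of_forall_mem_Icc [IsProbabilityMeasure μ] (h : ∀ x, φ x ∈ Icc (0:ℝ) 1) :
    ∫ x, φ x ∂μ ∈ Icc (0:ℝ) 1 := by
  refine ⟨integral_nonneg fun x => (h x).1, ?_⟩
  have := norm_integral_le_of_norm_le_const (μ := μ)
    (ae_of_all _ fun x => norm_le_one_of_mem_Icc (h x))
  simp only [probReal_univ, mul_one, Real.norm_eq_abs] at this
  exact (le_abs_self _).trans this

end UnitIntervalValued

lemma ContinuousOn.measurable_comp {α β X : Type*} [TopologicalSpace α] [MeasurableSpace α]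
    [OpensMeasurableSpace α] [TopologicalSpace β] [MeasurableSpace β] [BorelSpace β]
    [MeasurableSpace X] {f : α → β} {s : Set α} {g : X → α}
    (hf : ContinuousOn f s) (hg : Measurable g) (hgs : ∀ x, g x ∈ s) : Measurable (f ∘ g) :=
  (continuousOn_iff_continuous_domRestrict.mp hf).measurable.comp (hg.subtype_mk (h := hgs))

lemma ContinuousOn.integrable_comp {α X : Type*} [TopologicalSpace α] [MeasurableSpace α]
    [OpensMeasurableSpace α] [MeasurableSpace X] {μ : Measure X} [IsFiniteMeasure μ]
    {f : α → ℝ} {s : Set α} {g : X → α} (hf : ContinuousOn f s) (hs : IsCompact s)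
    (hg : Measurable g) (hgs : ∀ x, g x ∈ s) : Integrable (f ∘ g) μ := by
  obtain ⟨C, hC⟩ := hs.exists_bound_of_continuousOn hf
  exact .of_bound (hf.measurable_comp hg hgs).aestronglyMeasurable C
    (ae_of_all _ fun x => hC _ (hgs x))

lemma preimage_update_univ_pi {ι : Type*} [DecidableEq ι] {α : ι → Type*} (i : ι)
    (s : ∀ j, Set (α j)) :
    (fun p : (∀ j, α j) × α i => update p.1 i p.2) ⁻¹' univ.pi s =
      univ.pi (update s i univ) ×ˢ s i := by
  ext ⟨x, z⟩
  simp only [mem_preimage, mem_prod, mem_univ_pi]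
  constructor
  · intro h
    refine ⟨fun j => ?_, by simpa using h i⟩
    rcases eq_or_ne j i with rfl | hj
    · simp
    · simpa [hj] using h j
  · rintro ⟨hx, hz⟩ j
    rcases eq_or_ne j i with rfl | hj
    · simpa
    · simpa [hj] using hx j

section ResampleCoordinate

variable {ι : Type*} [Fintype ι] [DecidableEq ι] {α : ι → Type*} [∀ i, MeasurableSpace (α i)]
  (μ : ∀ i, Measure (α i)) [∀ i, IsProbabilityMeasure (μ i)]

lemma Measure.map_update_prod_pi (i : ι) :
    ((Measure.pi μ).prod (μ i)).map (fun p => update p.1 i p.2) = Measure.pi μ := by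
  refine (Measure.pi_eq fun s hs => ?_).symm
  rw [Measure.map_apply measurable_update' (.univ_pi hs), preimage_update_univ_pi,
    Measure.prod_prod, Measure.pi_pi, ← Finset.prod_erase_mul _ _ (Finset.mem_univ i),
    ← Finset.prod_erase_mul _ _ (Finset.mem_univ i)]
  simp only [update_self, measure_univ, mul_one]
  congr 1
  refine Finset.prod_congr rfl fun j hj => ?_
  rw [update_of_ne (Finset.ne_of_mem_erase hj)]

lemma integral_pi_eq_integral_prod_update {E : Type*} [NormedAddCommGroup E] [NormedSpace ℝ E]
    {F : (∀ j, α j) → E} (hF : AEStronglyMeasurable F (Measure.pi μ)) (i : ι) :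
    ∫ x, F x ∂Measure.pi μ = ∫ p, F (update p.1 i p.2) ∂(Measure.pi μ).prod (μ i) := by
  conv_lhs => rw [← Measure.map_update_prod_pi μ i]
  exact integral_map measurable_update'.aemeasurable (by rwa [Measure.map_update_prod_pi])

end ResampleCoordinate

lemma stronglyMeasurable_integral_kernel_uncurry {α β γ : Type*} [MeasurableSpace α]
    [MeasurableSpace β] [MeasurableSpace γ] (κ : Kernel α β) [IsSFiniteKernel κ]
    {q : γ → β → ℝ} (hq : Measurable (uncurry q)) :
    StronglyMeasurable fun p : α × γ => ∫ y, q p.2 y ∂κ p.1 := by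
  have hq' : StronglyMeasurable fun r : (α × γ) × β => q r.1.2 r.2 :=
    (hq.comp ((measurable_snd.comp measurable_fst).prodMk measurable_snd)).stronglyMeasurable
  simpa only [Kernel.comap_apply] using
    hq'.integral_kernel_prod_right' (κ := κ.comap Prod.fst measurable_fst)

lemma one_div_card_mul_sum_le {ι : Type*} [Fintype ι] {a : ι → ℝ} {c : ℝ} (hc : 0 ≤ c)
    (h : ∀ i, a i ≤ c) : 1 / (Fintype.card ι : ℝ) * ∑ i, a i ≤ c := by
  rcases isEmpty_or_nonempty ι with hι | hι
  · simpa using hc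
  rw [one_div_mul_eq_div, div_le_iff₀ (by simp [Fintype.card_pos])]
  calc ∑ i, a i ≤ ∑ _i : ι, c := Finset.sum_le_sum fun i _ => h i
    _ = c * Fintype.card ι := by simp [mul_comm]

section ReplaceOne

variable {ι D Θ : Type*} [Fintype ι] [DecidableEq ι] [MeasurableSpace D] [MeasurableSpace Θ]
  {f : ℝ → ℝ} {M : Kernel (ι → D) Θ} [IsMarkovKernel M] {P : Measure D} [IsProbabilityMeasure P]
  {q : D → Θ → ℝ}

theorem integral_loss_coord_le_of_fdp (hconv : ConvexOn ℝ (Icc 0 1) f)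
    (hcont : ContinuousOn f (Icc 0 1)) {i : ι}
    (hDP : ∀ S z, FDPIneq f (M S) (M (update S i z)))
    (hq : Measurable (uncurry q)) (hq01 : ∀ z θ, q z θ ∈ Icc (0:ℝ) 1) :
    ∫ S, ∫ θ, q (S i) θ ∂M S ∂Measure.pi (fun _ => P) ≤
      1 - f (∫ S, ∫ z, ∫ θ, q z θ ∂M S ∂P ∂Measure.pi (fun _ => P)) := by
  set μ := Measure.pi fun _ : ι => P
  set g : (ι → D) × D → ℝ := fun p => ∫ θ, q p.2 θ ∂M p.1
  have hg : StronglyMeasurable g := stronglyMeasurable_integral_kernel_uncurry M hq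
  have hg01 : ∀ p, g p ∈ Icc (0:ℝ) 1 := fun p => integral_mem_Icc_of_forall_mem_Icc (hq01 p.2)
  have hg_int : Integrable g (μ.prod P) :=
    integrable_of_forall_mem_Icc hg.aestronglyMeasurable hg01
  have hfg_int : Integrable (fun p => f (g p)) (μ.prod P) :=
    hcont.integrable_comp isCompact_Icc hg.measurable hg01
  calc ∫ S, g (S, S i) ∂μ = ∫ p, g (update p.1 i p.2, p.2) ∂μ.prod P := by
        simpa using integral_pi_eq_integral_prod_update (fun _ => P) (i := i)
          (hg.comp_measurable (measurable_id.prodMk (measurable_pi_apply i))).aestronglyMeasurable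
    _ ≤ ∫ p, (1 - f (g p)) ∂μ.prod P := by
      refine integral_mono (integrable_of_forall_mem_Icc ?_ fun p => hg01 _)
        ((integrable_const 1).sub hfg_int) fun p => ?_
      · exact (hg.comp_measurable (measurable_update'.prodMk measurable_snd)).aestronglyMeasurable
      · exact hDP p.1 p.2 (q p.2) hq.of_uncurry_left (hq01 p.2)
    _ = 1 - ∫ p, f (g p) ∂μ.prod P := by
      rw [integral_sub (integrable_const 1) hfg_int, integral_const, probReal_univ, one_smul]
    _ ≤ 1 - f (∫ p, g p ∂μ.prod P) := by
      gcongr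
      exact hconv.map_integral_le hcont isClosed_Icc (ae_of_all _ hg01) hg_int hfg_int
    _ = 1 - f (∫ S, ∫ z, g (S, z) ∂P ∂μ) := by rw [integral_prod g hg_int]

end ReplaceOne

theorem stmt_12_general {D Θ : Type*} [MeasurableSpace D] [MeasurableSpace Θ]
    (n : ℕ)
    (f : ℝ → ℝ) (hf : IsTradeoff f)
    (M : Kernel (Fin n → D) Θ) [IsMarkovKernel M]
    (hDP : ∀ S S' : Fin n → D, (∃ i : Fin n, ∀ j : Fin n, j ≠ i → S j = S' j) →
      FDPIneq f (M S') (M S))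
    (P : Measure D) [IsProbabilityMeasure P]
    (q : D → Θ → ℝ) (hq : Measurable (Function.uncurry q))
    (hq01 : ∀ z θ, q z θ ∈ Set.Icc (0:ℝ) 1) :
    ∫ S, ∫ θ, (1 / (n : ℝ)) * ∑ i : Fin n, q (S i) θ ∂(M S)
        ∂(Measure.pi fun _ : Fin n => P) ≤
      1 - f (∫ S, ∫ z, ∫ θ, q z θ ∂(M S) ∂P ∂(Measure.pi fun _ : Fin n => P)) := by
  obtain ⟨hconv, hcont, -, hvals⟩ := hf
  have hloss : ∀ S i, Integrable (fun θ => q (S i) θ) (M S) := fun S i =>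
    integrable_of_forall_mem_Icc hq.of_uncurry_left.aestronglyMeasurable (hq01 _)
  have htrain : ∀ i, Integrable (fun S : Fin n → D => ∫ θ, q (S i) θ ∂M S)
      (Measure.pi fun _ => P) := fun i =>
    integrable_of_forall_mem_Icc ((stronglyMeasurable_integral_kernel_uncurry M hq).comp_measurable
      (measurable_id.prodMk (measurable_pi_apply i))).aestronglyMeasurable
      fun S => integral_mem_Icc_of_forall_mem_Icc (hq01 _)
  have htest : (∫ S, ∫ z, ∫ θ, q z θ ∂M S ∂P ∂Measure.pi fun _ : Fin n => P) ∈ Icc (0:ℝ) 1 :=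
    integral_mem_Icc_of_forall_mem_Icc fun S => integral_mem_Icc_of_forall_mem_Icc fun z =>
      integral_mem_Icc_of_forall_mem_Icc (hq01 z)
  simp_rw [integral_const_mul, integral_finsetSum _ fun i _ => hloss _ i]
  rw [integral_finsetSum _ fun i _ => htrain i]
  simpa using one_div_card_mul_sum_le (sub_nonneg.2 (hvals _ htest).1.2) fun i =>
    integral_loss_coord_le_of_fdp hconv hcont
      (fun S z => hDP _ S ⟨i, fun j hj => update_of_ne hj z S⟩) hq hq01

/-- Lemma D.1, first inequality: on-average train loss is bounded by the
on-average test loss for an `f`-DP (replace-one) mechanism. -/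
theorem stmt_12 {D Θ : Type*} [MeasurableSpace D] [MeasurableSpace Θ]
    (n : ℕ) (hn : 1 ≤ n)
    (f : ℝ → ℝ) (hf : IsTradeoff f)
    (M : Kernel (Fin n → D) Θ) [IsMarkovKernel M]
    (hDP : ∀ S S' : Fin n → D, (∃ i : Fin n, ∀ j : Fin n, j ≠ i → S j = S' j) →
      FDPIneq f (M S') (M S))
    (P : Measure D) [IsProbabilityMeasure P]
    (q : D → Θ → ℝ) (hq : Measurable (Function.uncurry q))
    (hq01 : ∀ z θ, q z θ ∈ Set.Icc (0:ℝ) 1) :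
    ∫ S, ∫ θ, (1 / (n : ℝ)) * ∑ i : Fin n, q (S i) θ ∂(M S)
        ∂(Measure.pi fun _ : Fin n => P) ≤
      1 - f (∫ S, ∫ z, ∫ θ, q z θ ∂(M S) ∂P ∂(Measure.pi fun _ : Fin n => P)) :=
  stmt_12_general n f hf M hDP P q hq hq01
end

section
/- Let n ≥ 1, let D and Θ be measurable spaces, let f be a trade-off function, and let M be a Markov kernel from Dⁿ (functions Fin n → D) to Θ satisfying f-DP with respect to the replace-one relation. Then for every probability measure P on D and every jointly measurable q : D × Θ → [0,1], the on-average test loss is bounded by the on-average train loss: ∫_{Dⁿ} ∫_D ∫_Θ q(z, θ) d(M(S))(θ) dP(z) dPⁿ(S) ≤ 1 − f( ∫_{Dⁿ} ∫_Θ (1/n) Σ_{i=1}^{n} q(S_i, θ) d(M(S))(θ) dPⁿ(S) ). -/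
open MeasureTheory ProbabilityTheory

lemma integrable_of_mem_Icc01 {α : Type*} [MeasurableSpace α] (μ : Measure α)
    [IsFiniteMeasure μ] {h : α → ℝ} (hm : AEStronglyMeasurable h μ)
    (hb : ∀ x, h x ∈ Set.Icc (0:ℝ) 1) : Integrable h μ :=
  Integrable.mono' (integrable_const 1) hm (Filter.Eventually.of_forall fun x => by
    rw [Real.norm_eq_abs, abs_le]
    exact ⟨by linarith [(hb x).1], (hb x).2⟩)

lemma measurable_update_pair {D : Type*} [MeasurableSpace D] {n : ℕ} (i : Fin n) :
    Measurable (fun p : (Fin n → D) × D => Function.update p.1 i p.2) := by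
  apply measurable_pi_lambda
  intro j
  by_cases h : j = i
  · subst h
    simpa only [Function.update_self] using
      (measurable_snd : Measurable fun p : (Fin n → D) × D => p.2)
  · simp only [Function.update_of_ne h]
    exact (measurable_pi_apply j).comp measurable_fst

lemma map_update_pi {D : Type*} [MeasurableSpace D] {n : ℕ} (P : Measure D)
    [IsProbabilityMeasure P] (i : Fin n) :
    Measure.map (fun p : (Fin n → D) × D => Function.update p.1 i p.2)
      ((Measure.pi fun _ : Fin n => P).prod P) = Measure.pi fun _ : Fin n => P := by
  classical
  have hU := measurable_update_pair (D := D) i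
  refine (Measure.pi_eq fun s hs => ?_).symm
  rw [Measure.map_apply hU (MeasurableSet.univ_pi hs)]
  have hpre : (fun p : (Fin n → D) × D => Function.update p.1 i p.2) ⁻¹'
      (Set.pi Set.univ s) =
      (Set.pi Set.univ (Function.update s i Set.univ)) ×ˢ (s i) := by
    ext ⟨S, z⟩
    simp only [Set.mem_preimage, Set.mem_pi, Set.mem_univ, forall_true_left,
      Set.mem_prod]
    constructor
    · intro h
      refine ⟨fun j => ?_, by simpa [Function.update_self] using h i⟩
      by_cases hj : j = i
      · subst hj; simp
      · simpa [Function.update_of_ne hj] using h j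
    · rintro ⟨h1, h2⟩ j
      by_cases hj : j = i
      · subst hj; simpa [Function.update_self] using h2
      · have := h1 j
        simpa [Function.update_of_ne hj] using this
  rw [hpre, Measure.prod_prod, Measure.pi_pi]
  have hfun : (fun j => P (Function.update s i Set.univ j)) =
      Function.update (fun j => P (s j)) i 1 := by
    funext j
    by_cases hj : j = i
    · subst hj; simp
    · simp [Function.update_of_ne hj]
  rw [hfun, Finset.prod_update_of_mem (Finset.mem_univ i), one_mul, mul_comm,
    Finset.sdiff_singleton_eq_erase]
  exact Finset.mul_prod_erase Finset.univ (fun j => P (s j)) (Finset.mem_univ i)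

/-- Lemma D.1, second inequality: on-average test loss is bounded by the
on-average train loss for an `f`-DP (replace-one) mechanism. -/
theorem stmt_13 {D Θ : Type*} [MeasurableSpace D] [MeasurableSpace Θ]
    (n : ℕ) (hn : 1 ≤ n)
    (f : ℝ → ℝ) (hf : IsTradeoff f)
    (M : Kernel (Fin n → D) Θ) [IsMarkovKernel M]
    (hDP : ∀ S S' : Fin n → D, (∃ i : Fin n, ∀ j : Fin n, j ≠ i → S j = S' j) →
      FDPIneq f (M S') (M S))
    (P : Measure D) [IsProbabilityMeasure P]
    (q : D → Θ → ℝ) (hq : Measurable (Function.uncurry q))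
    (hq01 : ∀ z θ, q z θ ∈ Set.Icc (0:ℝ) 1) :
    ∫ S, ∫ z, ∫ θ, q z θ ∂(M S) ∂P ∂(Measure.pi fun _ : Fin n => P) ≤
      1 - f (∫ S, ∫ θ, (1 / (n : ℝ)) * ∑ i : Fin n, q (S i) θ ∂(M S)
        ∂(Measure.pi fun _ : Fin n => P)) := by
  classical
  have hn0 : (n : ℝ) ≠ 0 := Nat.cast_ne_zero.mpr (by omega)
  have hnpos : (0 : ℝ) < (n : ℝ) := by positivity
  set μn : Measure (Fin n → D) := Measure.pi fun _ : Fin n => P with hμn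
  -- the continuous extension of f
  set F : ℝ → ℝ := fun x => f (Set.projIcc (0:ℝ) 1 zero_le_one x) with hFdef
  have hFc : Continuous F :=
    (continuousOn_iff_continuous_restrict.mp hf.2.1).comp continuous_projIcc
  have hFeq : ∀ x ∈ Set.Icc (0:ℝ) 1, F x = f x := by
    intro x hx
    simp only [hFdef, Set.projIcc_of_mem zero_le_one hx]
  have hqz : ∀ z : D, Measurable (q z) := fun z => hq.comp measurable_prodMk_left
  have hqint : ∀ (z : D) (S : Fin n → D), Integrable (q z) (M S) := fun z S =>
    integrable_of_mem_Icc01 _ (hqz z).aestronglyMeasurable (fun θ => hq01 z θ)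
  -- the per-coordinate train loss
  set g : (Fin n → D) → Fin n → ℝ := fun S j => ∫ θ, q (S j) θ ∂(M S) with hgdef
  have hgm : ∀ j, Measurable fun S => g S j := by
    intro j
    have hm0 : Measurable fun p : (Fin n → D) × Θ => ((p.1 j), p.2) :=
      ((measurable_pi_apply j).comp measurable_fst).prodMk measurable_snd
    have hsm : StronglyMeasurable fun p : (Fin n → D) × Θ => q (p.1 j) p.2 :=
      Measurable.stronglyMeasurable (hq.comp hm0)
    exact (StronglyMeasurable.integral_kernel_prod_right' (κ := M) hsm).measurable
  have hg01 : ∀ S j, g S j ∈ Set.Icc (0:ℝ) 1 := by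
    intro S j
    refine ⟨integral_nonneg fun θ => (hq01 _ θ).1, ?_⟩
    calc ∫ θ, q (S j) θ ∂(M S) ≤ ∫ _θ, (1:ℝ) ∂(M S) :=
          integral_mono (hqint _ _) (integrable_const 1) (fun θ => (hq01 _ θ).2)
      _ = 1 := by simp
  -- the test loss integrand
  set c : (Fin n → D) × D → ℝ := fun p => ∫ θ, q p.2 θ ∂(M p.1) with hcdef
  have hcm : Measurable c := by
    have hm0 : Measurable fun p : ((Fin n → D) × D) × Θ => (p.1.2, p.2) :=
      (measurable_snd.comp measurable_fst).prodMk measurable_snd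
    have hsm : StronglyMeasurable fun p : ((Fin n → D) × D) × Θ => q p.1.2 p.2 :=
      Measurable.stronglyMeasurable (hq.comp hm0)
    have := (StronglyMeasurable.integral_kernel_prod_right'
      (κ := M.comap Prod.fst measurable_fst) hsm).measurable
    simpa only [Kernel.comap_apply] using this
  have hc01 : ∀ p, c p ∈ Set.Icc (0:ℝ) 1 := by
    intro p
    refine ⟨integral_nonneg fun θ => (hq01 _ θ).1, ?_⟩
    calc ∫ θ, q p.2 θ ∂(M p.1) ≤ ∫ _θ, (1:ℝ) ∂(M p.1) :=
          integral_mono (hqint _ _) (integrable_const 1) (fun θ => (hq01 _ θ).2)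
      _ = 1 := by simp
  -- the average train loss
  set X : (Fin n → D) → ℝ := fun S => (1 / (n:ℝ)) * ∑ j : Fin n, g S j with hXdef
  have hXm : Measurable X :=
    (Finset.measurable_sum Finset.univ fun j _ => hgm j).const_mul _
  have hX01 : ∀ S, X S ∈ Set.Icc (0:ℝ) 1 := by
    intro S
    constructor
    · exact mul_nonneg (by positivity) (Finset.sum_nonneg fun j _ => (hg01 S j).1)
    · have h1 : ∑ j : Fin n, g S j ≤ (n : ℝ) := by
        calc ∑ j : Fin n, g S j ≤ ∑ _j : Fin n, (1:ℝ) :=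
              Finset.sum_le_sum fun j _ => (hg01 S j).2
          _ = (n : ℝ) := by simp
      calc X S ≤ (1 / (n:ℝ)) * (n:ℝ) :=
            mul_le_mul_of_nonneg_left h1 (by positivity)
        _ = 1 := by field_simp
  -- rewrite the right-hand side
  have hA : ∀ S, ∫ θ, (1 / (n : ℝ)) * ∑ i : Fin n, q (S i) θ ∂(M S) = X S := by
    intro S
    rw [integral_const_mul]
    congr 1
    rw [integral_finset_sum _ fun j _ => hqint _ _]
  -- integrability facts over μn
  have hFg_int : ∀ j, Integrable (fun S => F (g S j)) μn := fun j =>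
    integrable_of_mem_Icc01 _ (hFc.measurable.comp (hgm j)).aestronglyMeasurable
      (fun S => by rw [hFeq _ (hg01 S j)]; exact (hf.2.2.2 _ (hg01 S j)).1)
  have hXint : Integrable X μn :=
    integrable_of_mem_Icc01 _ hXm.aestronglyMeasurable hX01
  have hfXint : Integrable (fun S => f (X S)) μn := by
    have hfe : (fun S => f (X S)) = fun S => F (X S) :=
      funext fun S => (hFeq _ (hX01 S)).symm
    rw [hfe]
    exact integrable_of_mem_Icc01 _ (hFc.measurable.comp hXm).aestronglyMeasurable
      (fun S => by rw [hFeq _ (hX01 S)]; exact (hf.2.2.2 _ (hX01 S)).1)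
  -- the key per-coordinate bound
  have key : ∀ i : Fin n,
      (∫ S, ∫ z, c (S, z) ∂P ∂μn) ≤ ∫ S, (1 - F (g S i)) ∂μn := by
    intro i
    have hU := measurable_update_pair (D := D) i
    have step1 : ∀ p : (Fin n → D) × D,
        c p ≤ 1 - F (g (Function.update p.1 i p.2) i) := by
      rintro ⟨S, z⟩
      have hdiff : ∃ k : Fin n, ∀ j : Fin n, j ≠ k →
          S j = Function.update S i z j :=
        ⟨i, fun j hj => (Function.update_of_ne hj _ _).symm⟩
      have hDP' := hDP S (Function.update S i z) hdiff (q z) (hqz z)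
        (fun θ => hq01 z θ)
      have hg' : g (Function.update S i z) i
          = ∫ θ, q z θ ∂(M (Function.update S i z)) := by
        simp only [hgdef, Function.update_self]
      rw [hFeq _ (hg01 _ i), hg']
      exact hDP'
    have hRm : Measurable fun p : (Fin n → D) × D =>
        1 - F (g (Function.update p.1 i p.2) i) :=
      measurable_const.sub (hFc.measurable.comp ((hgm i).comp hU))
    have hR01 : ∀ p : (Fin n → D) × D,
        (1 - F (g (Function.update p.1 i p.2) i)) ∈ Set.Icc (0:ℝ) 1 := by
      intro p
      have h1 := (hf.2.2.2 _ (hg01 (Function.update p.1 i p.2) i)).1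
      rw [hFeq _ (hg01 (Function.update p.1 i p.2) i)]
      exact ⟨by linarith [h1.2], by linarith [h1.1]⟩
    have hcint : Integrable c (μn.prod P) :=
      integrable_of_mem_Icc01 _ hcm.aestronglyMeasurable hc01
    have hRint : Integrable
        (fun p : (Fin n → D) × D => 1 - F (g (Function.update p.1 i p.2) i))
        (μn.prod P) :=
      integrable_of_mem_Icc01 _ hRm.aestronglyMeasurable hR01
    calc ∫ S, ∫ z, c (S, z) ∂P ∂μn = ∫ p, c p ∂(μn.prod P) := by
          exact integral_integral hcint
      _ ≤ ∫ p, (1 - F (g (Function.update p.1 i p.2) i)) ∂(μn.prod P) :=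
          integral_mono hcint hRint step1
      _ = ∫ S, (1 - F (g S i)) ∂μn := by
          have hmeas : AEStronglyMeasurable (fun S => 1 - F (g S i))
              (Measure.map (fun p : (Fin n → D) × D => Function.update p.1 i p.2)
                ((Measure.pi fun _ : Fin n => P).prod P)) := by
            rw [map_update_pi P i]
            exact (measurable_const.sub
              (hFc.measurable.comp (hgm i))).aestronglyMeasurable
          conv_rhs => rw [hμn, ← map_update_pi P i]
          rw [integral_map hU.aemeasurable hmeas, hμn]
  -- average the bound over i
  set T : ℝ := ∫ S, ∫ z, c (S, z) ∂P ∂μn with hT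
  have hsum : T ≤ ∫ S, (1 / (n:ℝ)) * ∑ i : Fin n, (1 - F (g S i)) ∂μn := by
    have h1 : (n : ℝ) * T ≤ ∑ i : Fin n, ∫ S, (1 - F (g S i)) ∂μn := by
      calc (n : ℝ) * T = ∑ _i : Fin n, T := by
            simp [Finset.sum_const, nsmul_eq_mul]
        _ ≤ ∑ i : Fin n, ∫ S, (1 - F (g S i)) ∂μn :=
            Finset.sum_le_sum fun i _ => key i
    have h2 : T ≤ (1 / (n:ℝ)) * ∑ i : Fin n, ∫ S, (1 - F (g S i)) ∂μn := by
      have := mul_le_mul_of_nonneg_left h1 (by positivity : (0:ℝ) ≤ 1 / (n:ℝ))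
      calc T = (1 / (n:ℝ)) * ((n:ℝ) * T) := by field_simp
        _ ≤ _ := this
    calc T ≤ (1 / (n:ℝ)) * ∑ i : Fin n, ∫ S, (1 - F (g S i)) ∂μn := h2
      _ = ∫ S, (1 / (n:ℝ)) * ∑ i : Fin n, (1 - F (g S i)) ∂μn := by
          rw [← integral_finset_sum _ (fun i _ =>
            (show Integrable (fun S => 1 - F (g S i)) μn from
              (integrable_const 1).sub (hFg_int i))), ← integral_const_mul]
  -- pointwise finite Jensen
  have hfX : ∀ S, f (X S) ≤ (1 / (n:ℝ)) * ∑ i : Fin n, F (g S i) := by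
    intro S
    have hw : ∑ _i : Fin n, (1 / (n:ℝ)) = 1 := by
      simp [Finset.sum_const, nsmul_eq_mul]
      field_simp
    have hJ := (hf.1).map_sum_le (t := Finset.univ)
      (w := fun _ : Fin n => 1 / (n:ℝ)) (p := fun i => g S i)
      (fun i _ => by positivity) hw (fun i _ => hg01 S i)
    have hXS : X S = ∑ i : Fin n, (1 / (n:ℝ)) • g S i := by
      simp [hXdef, Finset.mul_sum, smul_eq_mul]
    rw [hXS]
    calc f (∑ i : Fin n, (1 / (n:ℝ)) • g S i)
        ≤ ∑ i : Fin n, (1 / (n:ℝ)) • f (g S i) := hJ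
      _ = (1 / (n:ℝ)) * ∑ i : Fin n, F (g S i) := by
          rw [Finset.mul_sum]
          exact Finset.sum_congr rfl fun i _ => by
            rw [smul_eq_mul, hFeq _ (hg01 S i)]
  -- Jensen over the measure
  have hJensen : f (∫ S, X S ∂μn) ≤ ∫ S, f (X S) ∂μn := by
    refine (hf.1).map_integral_le hf.2.1 isClosed_Icc
      (Filter.Eventually.of_forall fun S => hX01 S) hXint ?_
    exact hfXint
  -- put everything together
  have hgoal2 : ∫ S, (1 / (n:ℝ)) * ∑ i : Fin n, (1 - F (g S i)) ∂μn
      ≤ 1 - f (∫ S, X S ∂μn) := by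
    have hpt : ∀ S, (1 / (n:ℝ)) * ∑ i : Fin n, (1 - F (g S i))
        = 1 - (1 / (n:ℝ)) * ∑ i : Fin n, F (g S i) := by
      intro S
      rw [Finset.sum_sub_distrib]
      simp only [Finset.sum_const, Finset.card_univ, Fintype.card_fin,
        nsmul_eq_mul, mul_one]
      field_simp
    have hint2 : Integrable (fun S => (1 / (n:ℝ)) * ∑ i : Fin n, F (g S i)) μn :=
      ((integrable_finset_sum Finset.univ fun i _ => hFg_int i).const_mul _)
    calc ∫ S, (1 / (n:ℝ)) * ∑ i : Fin n, (1 - F (g S i)) ∂μn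
        = ∫ S, (1 - (1 / (n:ℝ)) * ∑ i : Fin n, F (g S i)) ∂μn := by
          exact integral_congr_ae (Filter.Eventually.of_forall fun S => hpt S)
      _ = 1 - ∫ S, (1 / (n:ℝ)) * ∑ i : Fin n, F (g S i) ∂μn := by
          rw [integral_sub (integrable_const 1) hint2, integral_const]
          simp
      _ ≤ 1 - f (∫ S, X S ∂μn) := by
          have h3 : f (∫ S, X S ∂μn)
              ≤ ∫ S, (1 / (n:ℝ)) * ∑ i : Fin n, F (g S i) ∂μn := by
            refine hJensen.trans ?_
            exact integral_mono hfXint hint2 fun S => hfX S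
          linarith
  have hfinal : T ≤ 1 - f (∫ S, X S ∂μn) := hsum.trans hgoal2
  have hgoalR : (∫ S, ∫ θ, (1 / (n : ℝ)) * ∑ i : Fin n, q (S i) θ ∂(M S) ∂μn)
      = ∫ S, X S ∂μn := integral_congr_ae (Filter.Eventually.of_forall hA)
  calc ∫ S, ∫ z, ∫ θ, q z θ ∂(M S) ∂P ∂μn = T := rfl
    _ ≤ 1 - f (∫ S, X S ∂μn) := hfinal
    _ = 1 - f (∫ S, ∫ θ, (1 / (n : ℝ)) * ∑ i : Fin n, q (S i) θ ∂(M S) ∂μn) := by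
        rw [hgoalR]
end

section
/- Let n ≥ 1, let D and Θ be measurable spaces, let f be a trade-off function, and let M be a Markov kernel from Dⁿ (functions Fin n → D) to Θ satisfying f-DP with respect to the replace-one relation. Define f⁽ⁿ⁾ : [0,1] → [0,1] by f⁽ⁿ⁾(x) = 1 − (1−f)∘ⁿ(x), where (1−f)∘ⁿ is the n-fold composition of the map x ↦ 1 − f(x). Then for every probability measure P on D and every jointly measurable R : Dⁿ × Θ → [0,1], ∫_{Dⁿ} ∫_Θ R(S, θ) d(M(S))(θ) dPⁿ(S) ≤ 1 − f⁽ⁿ⁾( ∫_{Dⁿ} ∫_{Dⁿ} ∫_Θ R(T, θ) d(M(S))(θ) dPⁿ(T) dPⁿ(S) ). -/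
open MeasureTheory ProbabilityTheory

/-!
Write `g = 1 - f`; it maps `[0,1]` to itself and is monotone, concave and continuous, hence so
is `g^[n]`. Any two datasets are joined by `n` replace-one steps, so group privacy gives
`∫ R T dM(T) ≤ g^[n] (∫ R T dM(S))` for all `S, T`. Averaging over `T ~ Pⁿ` and applying
Jensen's inequality to the concave `g^[n]` bounds the left side by `g^[n]` of the inner integral
for every `S`; averaging over `S` and applying Jensen once more gives the claim.
-/

open Set

theorem MonotoneOn.iterate {α : Type*} [Preorder α] {s : Set α} {g : α → α}
    (hg : MonotoneOn g s) (hmaps : MapsTo g s s) : ∀ n, MonotoneOn g^[n] s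
  | 0 => monotoneOn_id
  | n + 1 => (hg.iterate hmaps n).comp hg hmaps

theorem ConcaveOn.comp_of_mapsTo {𝕜 E F β : Type*} [Semiring 𝕜] [PartialOrder 𝕜]
    [AddCommMonoid E] [Module 𝕜 E] [AddCommMonoid F] [PartialOrder F] [Module 𝕜 F]
    [AddCommMonoid β] [PartialOrder β] [SMul 𝕜 β] {s : Set E} {t : Set F} {f : E → F}
    {g : F → β} (hg : ConcaveOn 𝕜 t g) (hf : ConcaveOn 𝕜 s f) (hg_mono : MonotoneOn g t)
    (hmaps : MapsTo f s t) : ConcaveOn 𝕜 s (g ∘ f) :=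
  ⟨hf.1, fun _ hx _ hy _ _ ha hb hab =>
    (hg.2 (hmaps hx) (hmaps hy) ha hb hab).trans <|
      hg_mono (hg.1 (hmaps hx) (hmaps hy) ha hb hab) (hmaps (hf.1 hx hy ha hb hab))
        (hf.2 hx hy ha hb hab)⟩

theorem ConcaveOn.iterate {𝕜 E : Type*} [Semiring 𝕜] [PartialOrder 𝕜] [AddCommMonoid E]
    [PartialOrder E] [Module 𝕜 E] {s : Set E} {g : E → E} (hg : ConcaveOn 𝕜 s g)
    (hg_mono : MonotoneOn g s) (hmaps : MapsTo g s s) : ∀ n, ConcaveOn 𝕜 s g^[n]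
  | 0 => concaveOn_id hg.1
  | n + 1 => by
    rw [Function.iterate_succ']
    exact hg.comp_of_mapsTo (hg.iterate hg_mono hmaps n) hg_mono (hmaps.iterate n)

section Tradeoff

variable {f : ℝ → ℝ}

theorem IsTradeoff.mapsTo_one_sub (hf : IsTradeoff f) :
    MapsTo (fun x => 1 - f x) (Icc 0 1) (Icc 0 1) := fun x hx => by
  obtain ⟨h0, h1⟩ := (hf.2.2.2 x hx).1
  constructor <;> linarith

theorem IsTradeoff.monotoneOn_one_sub (hf : IsTradeoff f) :
    MonotoneOn (fun x => 1 - f x) (Icc 0 1) :=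
  fun _ hx _ hy hxy => sub_le_sub_left (hf.2.2.1 hx hy hxy) 1

theorem IsTradeoff.concaveOn_one_sub (hf : IsTradeoff f) :
    ConcaveOn ℝ (Icc 0 1) (fun x => 1 - f x) :=
  (concaveOn_const 1 (convex_Icc 0 1)).sub hf.1

theorem IsTradeoff.continuousOn_one_sub (hf : IsTradeoff f) :
    ContinuousOn (fun x => 1 - f x) (Icc 0 1) :=
  continuousOn_const.sub hf.2.1

end Tradeoff

section GroupPrivacy

variable {α : Type*} {n : ℕ}

def ReplaceOne (S S' : Fin n → α) : Prop := ∃ i : Fin n, ∀ j, j ≠ i → S j = S' j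

theorem le_iterate_of_replaceOne {β : Type*} [Preorder β] {s : Set β} {g : β → β}
    (hg : MonotoneOn g s) (hmaps : MapsTo g s s) {a : (Fin n → α) → β} (has : ∀ S, a S ∈ s)
    (hstep : ∀ S S', ReplaceOne S S' → a S ≤ g (a S')) (S T : Fin n → α) :
    a S ≤ g^[n] (a T) := by
  -- walk from `T` to `S` through the hybrids that take their first `k` coordinates from `S`
  let hybrid (k : ℕ) : Fin n → α := fun j => if (j : ℕ) < k then S j else T j
  have hhybrid : ∀ k ≤ n, a (hybrid k) ≤ g^[k] (a T) := by
    intro k hk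
    induction k with
    | zero => simp [hybrid]
    | succ k ih =>
      have hrep : ReplaceOne (hybrid (k + 1)) (hybrid k) := by
        refine ⟨⟨k, hk⟩, fun j hj => ?_⟩
        have hjk : (j : ℕ) ≠ k := fun h => hj (Fin.ext h)
        simp only [hybrid]
        split_ifs <;> first | rfl | omega
      calc a (hybrid (k + 1)) ≤ g (a (hybrid k)) := hstep _ _ hrep
        _ ≤ g (g^[k] (a T)) := hg (has _) (hmaps.iterate k (has T)) (ih (by omega))
        _ = g^[k + 1] (a T) := (Function.iterate_succ_apply' g k (a T)).symm
  simpa [hybrid] using hhybrid n le_rfl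

end GroupPrivacy

section Integral

variable {X : Type*} [MeasurableSpace X] {μ : Measure X} [IsProbabilityMeasure μ]

theorem integral_mem_Icc_zero_one {u : X → ℝ} (hu : ∀ x, u x ∈ Icc 0 1) :
    ∫ x, u x ∂μ ∈ Icc 0 1 := by
  refine ⟨integral_nonneg fun x => (hu x).1, (le_abs_self _).trans ?_⟩
  simpa using norm_integral_le_of_norm_le_const (μ := μ) (C := 1)
    (ae_of_all _ fun x => (Real.norm_of_nonneg (hu x).1).trans_le (hu x).2)

theorem integral_le_map_integral_of_le {s : Set ℝ} (hs : IsCompact s) {h : ℝ → ℝ}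
    (hconc : ConcaveOn ℝ s h) (hcont : ContinuousOn h s) {u v : X → ℝ} (hu : Measurable u)
    (hus : ∀ x, u x ∈ s) (hv : Integrable v μ) (hvu : ∀ x, v x ≤ h (u x)) :
    ∫ x, v x ∂μ ≤ h (∫ x, u x ∂μ) := by
  have hu_int : Integrable u μ := by
    obtain ⟨C, hC⟩ := hs.exists_bound_of_continuousOn continuousOn_id
    exact .of_bound hu.aestronglyMeasurable C (ae_of_all _ fun x => hC _ (hus x))
  have hhu_int : Integrable (h ∘ u) μ := by
    obtain ⟨C, hC⟩ := hs.exists_bound_of_continuousOn hcont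
    have hhu : Measurable (h ∘ u) :=
      (continuousOn_iff_continuous_domRestrict.mp hcont).measurable.comp (hu.subtype_mk (h := hus))
    exact .of_bound hhu.aestronglyMeasurable C (ae_of_all _ fun x => hC _ (hus x))
  calc ∫ x, v x ∂μ ≤ ∫ x, h (u x) ∂μ := integral_mono hv hhu_int hvu
    _ ≤ h (∫ x, u x ∂μ) :=
      hconc.le_map_integral hcont hs.isClosed (ae_of_all _ hus) hu_int hhu_int

end Integral

theorem integral_le_iterate_one_sub_of_replaceOne {D Θ : Type*} [MeasurableSpace D]
    [MeasurableSpace Θ] {n : ℕ} {f : ℝ → ℝ} (hf : IsTradeoff f) (M : Kernel (Fin n → D) Θ)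
    [IsMarkovKernel M] (hDP : ∀ S S', ReplaceOne S S' → FDPIneq f (M S') (M S))
    {φ : Θ → ℝ} (hφ : Measurable φ) (hφ01 : ∀ θ, φ θ ∈ Icc 0 1) (S T : Fin n → D) :
    ∫ θ, φ θ ∂M S ≤ (fun x => 1 - f x)^[n] (∫ θ, φ θ ∂M T) :=
  le_iterate_of_replaceOne hf.monotoneOn_one_sub hf.mapsTo_one_sub
    (fun _ => integral_mem_Icc_zero_one hφ01) (fun S S' h => hDP S S' h φ hφ hφ01) S T

theorem stmt_14_general {D Θ : Type*} [MeasurableSpace D] [MeasurableSpace Θ]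
    (n : ℕ)
    (f : ℝ → ℝ) (hf : IsTradeoff f)
    (M : Kernel (Fin n → D) Θ) [IsMarkovKernel M]
    (hDP : ∀ S S' : Fin n → D, (∃ i : Fin n, ∀ j : Fin n, j ≠ i → S j = S' j) →
      FDPIneq f (M S') (M S))
    (fn : ℝ → ℝ) (hfn : ∀ x, fn x = 1 - (fun y => 1 - f y)^[n] x)
    (P : Measure D) [IsProbabilityMeasure P]
    (R : (Fin n → D) → Θ → ℝ) (hR : Measurable (Function.uncurry R))
    (hR01 : ∀ S θ, R S θ ∈ Set.Icc (0:ℝ) 1) :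
    ∫ S, ∫ θ, R S θ ∂(M S) ∂(Measure.pi fun _ : Fin n => P) ≤
      1 - fn (∫ S, ∫ T, ∫ θ, R T θ ∂(M S) ∂(Measure.pi fun _ : Fin n => P)
        ∂(Measure.pi fun _ : Fin n => P)) := by
  set μ := Measure.pi fun _ : Fin n => P
  have hg_conc := hf.concaveOn_one_sub.iterate hf.monotoneOn_one_sub hf.mapsTo_one_sub n
  have hg_cont := hf.continuousOn_one_sub.iterate hf.mapsTo_one_sub n
  have hRM01 : ∀ S T, ∫ θ, R T θ ∂M S ∈ Icc 0 1 := fun S T => integral_mem_Icc_zero_one (hR01 T)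
  have hcross : Measurable fun p : (Fin n → D) × (Fin n → D) => ∫ θ, R p.2 θ ∂M p.1 :=
    (hR.comp (measurable_fst.snd.prodMk measurable_snd)).stronglyMeasurable
      |>.integral_kernel_prod_right' (κ := M.prodMkRight _) |>.measurable
  have hdiag : Measurable fun T => ∫ θ, R T θ ∂M T :=
    hR.stronglyMeasurable.integral_kernel_prod_right'.measurable
  have hinner (S : Fin n → D) :
      ∫ T, ∫ θ, R T θ ∂M T ∂μ ≤ (fun y => 1 - f y)^[n] (∫ T, ∫ θ, R T θ ∂M S ∂μ) :=
    integral_le_map_integral_of_le isCompact_Icc hg_conc hg_cont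
      (hcross.comp measurable_prodMk_left) (hRM01 S)
      (.of_bound hdiag.aestronglyMeasurable 1 (ae_of_all _ fun T =>
        (Real.norm_of_nonneg (hRM01 T T).1).trans_le (hRM01 T T).2))
      (fun T => integral_le_iterate_one_sub_of_replaceOne hf M hDP
        (hR.comp measurable_prodMk_left) (hR01 T) T S)
  rw [hfn, sub_sub_cancel]
  simpa using integral_le_map_integral_of_le (μ := μ) isCompact_Icc hg_conc hg_cont
    hcross.stronglyMeasurable.integral_prod_right'.measurable
    (fun S => integral_mem_Icc_zero_one (hRM01 S)) (integrable_const _) hinner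

/-- Lemma D.2, first inequality: generalization for non-linear queries via
group privacy, with `f⁽ⁿ⁾ = 1 - (1 - f)∘ⁿ`. -/
theorem stmt_14 {D Θ : Type*} [MeasurableSpace D] [MeasurableSpace Θ]
    (n : ℕ) (hn : 1 ≤ n)
    (f : ℝ → ℝ) (hf : IsTradeoff f)
    (M : Kernel (Fin n → D) Θ) [IsMarkovKernel M]
    (hDP : ∀ S S' : Fin n → D, (∃ i : Fin n, ∀ j : Fin n, j ≠ i → S j = S' j) →
      FDPIneq f (M S') (M S))
    (fn : ℝ → ℝ) (hfn : ∀ x, fn x = 1 - (fun y => 1 - f y)^[n] x)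
    (P : Measure D) [IsProbabilityMeasure P]
    (R : (Fin n → D) → Θ → ℝ) (hR : Measurable (Function.uncurry R))
    (hR01 : ∀ S θ, R S θ ∈ Set.Icc (0:ℝ) 1) :
    ∫ S, ∫ θ, R S θ ∂(M S) ∂(Measure.pi fun _ : Fin n => P) ≤
      1 - fn (∫ S, ∫ T, ∫ θ, R T θ ∂(M S) ∂(Measure.pi fun _ : Fin n => P)
        ∂(Measure.pi fun _ : Fin n => P)) :=
  stmt_14_general n f hf M hDP fn hfn P R hR hR01
end

section
/- Let D and Θ be measurable spaces, let η ≥ 0, and let μ be a Markov kernel from D to Θ such that for all z, z' ∈ D and every measurable set E ⊆ Θ, (μ(z))(E) ≤ (μ(z'))(E) + η. Then for every probability measure P on D, every jointly measurable ℓ : D × Θ → [0,1], and every z ∈ D, the counterfactual memorization of z is bounded: ∫_Θ ℓ(z,θ) d(μ(z))(θ) − ∫_D ∫_Θ ℓ(z,θ) d(μ(z'))(θ) dP(z') ≤ η. -/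
/-!
Write the expected loss as a layer-cake integral `∫₀¹ ν {ℓ > t} dt`. The privacy hypothesis
bounds each superlevel-set probability under `μ z` by the one under `μ z'` plus `η`, and this
survives averaging over `z' ∼ P`, i.e. passing to the mixture `μ ∘ₘ P`; integrating over
`t ∈ (0, 1)` costs `η` in total.
-/

open MeasureTheory ProbabilityTheory Set

namespace MeasureTheory

variable {Θ : Type*} [MeasurableSpace Θ] {ν ν' : Measure Θ} {f : Θ → ℝ}

theorem lintegral_le_lintegral_add_of_measure_le_add {c : ENNReal} (hf : Measurable f)
    (hf01 : ∀ θ, f θ ∈ Icc (0 : ℝ) 1) (hνν' : ∀ E, MeasurableSet E → ν E ≤ ν' E + c) :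
    ∫⁻ θ, ENNReal.ofReal (f θ) ∂ν ≤ ∫⁻ θ, ENNReal.ofReal (f θ) ∂ν' + c := by
  have hf0 : ∀ μ : Measure Θ, 0 ≤ᵐ[μ] f := fun _ => .of_forall fun θ => (hf01 θ).1
  have hlevel : ∀ t, ν {θ | t < f θ} ≤ ν' {θ | t < f θ} + (Iio 1).indicator (fun _ => c) t := by
    intro t
    by_cases ht : t < 1
    · simpa [indicator_of_mem (mem_Iio.2 ht)] using hνν' _ (measurableSet_lt measurable_const hf)
    · have hempty : {θ | t < f θ} = ∅ :=
        eq_empty_of_forall_notMem fun θ hθ => ht (hθ.trans_le (hf01 θ).2)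
      simp [hempty]
  calc ∫⁻ θ, ENNReal.ofReal (f θ) ∂ν = ∫⁻ t in Ioi 0, ν {θ | t < f θ} :=
        lintegral_eq_lintegral_meas_lt ν (hf0 ν) hf.aemeasurable
    _ ≤ ∫⁻ t in Ioi 0, (ν' {θ | t < f θ} + (Iio 1).indicator (fun _ => c) t) :=
        lintegral_mono hlevel
    _ = ∫⁻ θ, ENNReal.ofReal (f θ) ∂ν' + c := by
        rw [lintegral_add_right _ (measurable_const.indicator measurableSet_Iio),
          lintegral_indicator_const measurableSet_Iio, Measure.restrict_apply measurableSet_Iio,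
          Iio_inter_Ioi, Real.volume_Ioo,
          ← lintegral_eq_lintegral_meas_lt ν' (hf0 ν') hf.aemeasurable]
        simp

theorem integral_le_integral_add_of_measure_le_add [IsFiniteMeasure ν'] {η : ℝ} (hη : 0 ≤ η)
    (hf : Measurable f) (hf01 : ∀ θ, f θ ∈ Icc (0 : ℝ) 1)
    (hνν' : ∀ E, MeasurableSet E → ν E ≤ ν' E + ENNReal.ofReal η) :
    ∫ θ, f θ ∂ν ≤ ∫ θ, f θ ∂ν' + η := by
  have hf0 : ∀ μ : Measure Θ, 0 ≤ᵐ[μ] f := fun _ => .of_forall fun θ => (hf01 θ).1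
  have hfin : ∫⁻ θ, ENNReal.ofReal (f θ) ∂ν' ≠ ⊤ :=
    ((lintegral_mono fun θ => ENNReal.ofReal_le_one.2 (hf01 θ).2).trans_lt (by simp)).ne
  rw [integral_eq_lintegral_of_nonneg_ae (hf0 ν) hf.aestronglyMeasurable,
    integral_eq_lintegral_of_nonneg_ae (hf0 ν') hf.aestronglyMeasurable,
    ← ENNReal.toReal_ofReal hη, ← ENNReal.toReal_add hfin ENNReal.ofReal_ne_top]
  exact ENNReal.toReal_mono (by finiteness)
    (lintegral_le_lintegral_add_of_measure_le_add hf hf01 hνν')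

namespace Measure

variable {D : Type*} [MeasurableSpace D]

theorem le_comp_add_of_forall_le_add {κ : Kernel D Θ} (P : Measure D) [IsProbabilityMeasure P]
    {c : ENNReal} (hνκ : ∀ w E, MeasurableSet E → ν E ≤ κ w E + c) {E : Set Θ}
    (hE : MeasurableSet E) : ν E ≤ (κ ∘ₘ P) E + c := by
  calc ν E = ∫⁻ _, ν E ∂P := by simp
    _ ≤ ∫⁻ w, (κ w E + c) ∂P := lintegral_mono fun w => hνκ w E hE
    _ = (κ ∘ₘ P) E + c := by
        rw [lintegral_add_right _ measurable_const, bind_apply hE κ.aemeasurable]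
        simp

theorem integral_comp {E : Type*} [NormedAddCommGroup E] [NormedSpace ℝ E]
    (κ : Kernel D Θ) [IsSFiniteKernel κ] (P : Measure D) [SFinite P] {f : Θ → E}
    (hf : Integrable f (κ ∘ₘ P)) :
    ∫ θ, f θ ∂(κ ∘ₘ P) = ∫ w, ∫ θ, f θ ∂κ w ∂P := by
  rw [comp_eq_comp_const_apply] at hf ⊢
  simpa using Kernel.integral_comp hf

end Measure

end MeasureTheory

/-- Proposition in Appendix E: `η`-TV privacy (replace-one) bounds counterfactual
memorization by `η`. -/
theorem stmt_16 {D Θ : Type*} [MeasurableSpace D] [MeasurableSpace Θ]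
    (η : ℝ) (hη : 0 ≤ η)
    (μ : Kernel D Θ) [IsMarkovKernel μ]
    (hTV : ∀ z z' : D, ∀ E : Set Θ, MeasurableSet E →
      (μ z) E ≤ (μ z') E + ENNReal.ofReal η)
    (P : Measure D) [IsProbabilityMeasure P]
    (ℓ : D → Θ → ℝ) (hℓ : Measurable (Function.uncurry ℓ))
    (hℓ01 : ∀ z θ, ℓ z θ ∈ Set.Icc (0:ℝ) 1) (z : D) :
    (∫ θ, ℓ z θ ∂(μ z)) - (∫ z', ∫ θ, ℓ z θ ∂(μ z') ∂P) ≤ η := by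
  have hℓz : Measurable (ℓ z) := hℓ.of_uncurry_left
  have hint : Integrable (ℓ z) (μ ∘ₘ P) :=
    .of_bound hℓz.aestronglyMeasurable 1 <| .of_forall fun θ => by
      simpa [abs_of_nonneg (hℓ01 z θ).1] using (hℓ01 z θ).2
  rw [← Measure.integral_comp μ P hint, sub_le_iff_le_add']
  exact integral_le_integral_add_of_measure_le_add hη hℓz (hℓ01 z)
    fun E hE => Measure.le_comp_add_of_forall_le_add P (hTV z) hE
end

section
/- Let D be a measurable space, let η ≥ 0, let P be a probability measure on D, let ℓ : D × D → ℝ be jointly measurable, let γ ∈ ℝ, and let ρ be a Markov kernel from D to D such that for all z, z' ∈ D and every measurable set E ⊆ D, (ρ(z))(E) ≤ (ρ(z'))(E) + η. Define succ := ∫_D ρ(z)({ẑ : ℓ(z,ẑ) ≤ γ}) dP(z) and base := ∫_D ∫_D ρ(z')({ẑ : ℓ(z,ẑ) ≤ γ}) dP(z') dP(z). Then succ − base ≤ η. -/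
open MeasureTheory ProbabilityTheory

/-- Proposition E.2, second part: TV-privacy bound for the unbiased
reconstruction-robustness advantage. -/
theorem stmt_18 {D : Type*} [MeasurableSpace D]
    (η : ℝ) (hη : 0 ≤ η)
    (P : Measure D) [IsProbabilityMeasure P]
    (ℓ : D → D → ℝ) (hℓ : Measurable (Function.uncurry ℓ)) (γ : ℝ)
    (ρ : Kernel D D) [IsMarkovKernel ρ]
    (hTV : ∀ z z' : D, ∀ E : Set D, MeasurableSet E →
      (ρ z) E ≤ (ρ z') E + ENNReal.ofReal η)
    (succ base : ℝ)
    (hsucc : succ = ∫ z, ((ρ z) {zhat : D | ℓ z zhat ≤ γ}).toReal ∂P)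
    (hbase : base = ∫ z, ∫ z', ((ρ z') {zhat : D | ℓ z zhat ≤ γ}).toReal ∂P ∂P) :
    succ - base ≤ η := by
  -- the measurable set of successful reconstructions
  have hEset : ∀ z : D, MeasurableSet {zhat : D | ℓ z zhat ≤ γ} := fun z =>
    measurableSet_le (hℓ.comp (measurable_prodMk_left)) measurable_const
  -- the pair function
  set F : D × D → ℝ := fun p => ((ρ p.2) {zhat : D | ℓ p.1 zhat ≤ γ}).toReal with hF
  have hFmeas : Measurable F := by
    have hE' : MeasurableSet {q : (D × D) × D | ℓ q.1.1 q.2 ≤ γ} :=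
      measurableSet_le (hℓ.comp ((measurable_fst.comp measurable_fst).prodMk measurable_snd))
        measurable_const
    have := Kernel.measurable_kernel_prodMk_left (κ := Kernel.prodMkLeft D ρ) hE'
    exact (ENNReal.measurable_toReal.comp this)
  have hFbound : ∀ p : D × D, ‖F p‖ ≤ 1 := by
    intro p
    rw [Real.norm_eq_abs, abs_of_nonneg ENNReal.toReal_nonneg]
    exact ENNReal.toReal_le_of_le_ofReal zero_le_one (by simpa using prob_le_one)
  -- the success probability function
  set f : D → ℝ := fun z => ((ρ z) {zhat : D | ℓ z zhat ≤ γ}).toReal with hf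
  have hfmeas : Measurable f := by
    have hE2 : MeasurableSet {q : D × D | ℓ q.1 q.2 ≤ γ} :=
      measurableSet_le hℓ measurable_const
    have := Kernel.measurable_kernel_prodMk_left (κ := ρ) hE2
    exact ENNReal.measurable_toReal.comp this
  have hfbound : ∀ z : D, ‖f z‖ ≤ 1 := fun z => hFbound (z, z)
  -- the baseline inner integral
  set g : D → ℝ := fun z => ∫ z', F (z, z') ∂P with hg
  have hgmeas : StronglyMeasurable g :=
    hFmeas.stronglyMeasurable.integral_prod_right'
  have hgbound : ∀ z : D, ‖g z‖ ≤ 1 := by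
    intro z
    calc ‖g z‖ ≤ ∫ z', ‖F (z, z')‖ ∂P := norm_integral_le_integral_norm _
    _ ≤ ∫ (_ : D), (1 : ℝ) ∂P := by
        refine integral_mono_of_nonneg (Filter.Eventually.of_forall fun _ => norm_nonneg _)
          (integrable_const _) (Filter.Eventually.of_forall fun z' => hFbound (z, z'))
    _ = 1 := by simp
  have hfint : Integrable f P :=
    ⟨hfmeas.aestronglyMeasurable, HasFiniteIntegral.of_bounded
      (C := 1) (Filter.Eventually.of_forall hfbound)⟩
  have hgint : Integrable g P :=
    ⟨hgmeas.aestronglyMeasurable, HasFiniteIntegral.of_bounded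
      (C := 1) (Filter.Eventually.of_forall hgbound)⟩
  -- pointwise bound: f z ≤ g z + η
  have hpt : ∀ z : D, f z - g z ≤ η := by
    intro z
    have hFz : ∀ z' : D, f z - η ≤ F (z, z') := by
      intro z'
      have h1 := hTV z z' {zhat : D | ℓ z zhat ≤ γ} (hEset z)
      have h2 : ((ρ z) {zhat : D | ℓ z zhat ≤ γ}).toReal ≤
          ((ρ z') {zhat : D | ℓ z zhat ≤ γ}).toReal + η := by
        have := ENNReal.toReal_mono (by finiteness) h1
        rwa [ENNReal.toReal_add (by finiteness) ENNReal.ofReal_ne_top,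
          ENNReal.toReal_ofReal hη] at this
      simpa [hf, hF] using sub_le_iff_le_add.mpr h2
    have : f z - η ≤ g z := by
      have hci : Integrable (fun _ : D => f z - η) P := integrable_const _
      have hFi : Integrable (fun z' => F (z, z')) P :=
        ⟨(hFmeas.comp measurable_prodMk_left).aestronglyMeasurable,
          HasFiniteIntegral.of_bounded (C := 1)
            (Filter.Eventually.of_forall fun z' => hFbound (z, z'))⟩
      calc f z - η = ∫ (_ : D), (f z - η) ∂P := by simp
      _ ≤ ∫ z', F (z, z') ∂P :=
          integral_mono hci hFi (fun z' => hFz z')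
    linarith
  rw [hsucc, hbase]
  have : (∫ z, f z ∂P) - (∫ z, g z ∂P) = ∫ z, (f z - g z) ∂P :=
    (integral_sub hfint hgint).symm
  calc (∫ z, f z ∂P) - (∫ z, g z ∂P) = ∫ z, (f z - g z) ∂P := this
  _ ≤ ∫ (_ : D), η ∂P :=
      integral_mono (hfint.sub hgint) (integrable_const _) (fun z => hpt z)
  _ = η := by simp
end
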